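/- arXiv:2303.10016 — 12 statements merged into one kernel-verified Lean document; each statement's English description precedes it below -/
import Mathlib

section
/- Under monotonicity and the exclusion restriction, the intent-to-treat effect equals the compliance proportion times the complier average causal effect: (1/N) Σ_{i=1}^N (Y_i(1) − Y_i(0)) = π_c · τ, where τ = Ȳ_c(1) − Ȳ_c(0). -/
open Finset

/-- Under monotonicity and the exclusion restriction, the ITT equals the compliance
proportion times the CACE: (1/N) Σ (Y_i(1) − Y_i(0)) = π_c · τ. -/
theorem stmt_0 (N : ℕ) (hN : 2 ≤ N)
    (Y1 Y0 D1 D0 : Fin N → ℝ)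
    (hD1 : ∀ i, D1 i = 0 ∨ D1 i = 1)
    (hD0 : ∀ i, D0 i = 0 ∨ D0 i = 1)
    (mono : ∀ i, D0 i ≤ D1 i)
    (excl : ∀ i, D1 i = D0 i → Y1 i = Y0 i)
    (C : Finset (Fin N)) (hC : ∀ i, i ∈ C ↔ (D1 i = 1 ∧ D0 i = 0))
    (nc : ℕ) (hnc : nc = C.card) (hnc1 : 1 ≤ nc)
    (πc : ℝ) (hπc : πc = (nc : ℝ) / N)
    (Ybarc1 Ybarc0 τ : ℝ)
    (hYc1 : Ybarc1 = (∑ i ∈ C, Y1 i) / nc)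
    (hYc0 : Ybarc0 = (∑ i ∈ C, Y0 i) / nc)
    (hτ : τ = Ybarc1 - Ybarc0) :
    (1 / (N : ℝ)) * ∑ i, (Y1 i - Y0 i) = πc * τ := by
  have hsum : ∑ i, (Y1 i - Y0 i) = ∑ i ∈ C, (Y1 i - Y0 i) := by
    rw [← Finset.sum_subset (Finset.subset_univ C)]
    intro i _ hi
    have : D1 i = D0 i := by
      rcases hD1 i with h1 | h1 <;> rcases hD0 i with h0 | h0
      · rw [h1, h0]
      · exfalso; have := mono i; rw [h1, h0] at this; linarith
      · exact absurd ((hC i).mpr ⟨h1, h0⟩) hi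
      · rw [h1, h0]
    have := excl i this
    linarith
  have hncne : (nc : ℝ) ≠ 0 := by positivity
  have hNne : (N : ℝ) ≠ 0 := by positivity
  rw [hsum, hπc, hτ, hYc1, hYc0, Finset.sum_sub_distrib]
  field_simp
end

section
/- Under monotonicity, the exclusion restriction, and complete randomization, the difference-in-means ITT estimator satisfies E[ITT̂] = Ȳ(1) − Ȳ(0) = π_c · τ, where the expectation is over the uniform choice of the size-n1 treated subset and τ = Ȳ_c(1) − Ȳ_c(0). -/
open Finset

lemma count_mem_aux {α : Type*} [Fintype α] [DecidableEq α] (i : α) (k : ℕ) :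
    ((Finset.powersetCard (k+1) (Finset.univ : Finset α)).filter (fun T => i ∈ T)).card
      = (Fintype.card α - 1).choose k := by
  have hcard : ({i}ᶜ : Finset α).card = Fintype.card α - 1 := by
    simp [card_compl]
  rw [← hcard, ← Finset.card_powersetCard]
  apply Finset.card_bij (fun T _ => T.erase i)
  · intro T hT
    simp only [mem_filter, mem_powersetCard] at hT
    simp only [mem_powersetCard]
    constructor
    · intro x hx
      simp only [mem_erase] at hx
      simp [hx.1]
    · rw [Finset.card_erase_of_mem hT.2, hT.1.2]; omega
  · intro T hT T' hT' h
    simp only [mem_filter, mem_powersetCard] at hT hT'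
    have := congrArg (insert i) h
    rwa [Finset.insert_erase hT.2, Finset.insert_erase hT'.2] at this
  · intro S hS
    simp only [mem_powersetCard] at hS
    have hiS : i ∉ S := fun h => by simpa using hS.1 h
    refine ⟨insert i S, ?_, ?_⟩
    · simp only [mem_filter, mem_powersetCard]
      exact ⟨⟨subset_univ _, by rw [Finset.card_insert_of_notMem hiS, hS.2]⟩,
        Finset.mem_insert_self _ _⟩
    · rw [Finset.erase_insert hiS]

lemma sum_sum_mem_aux {α : Type*} [Fintype α] [DecidableEq α] (k : ℕ) (f : α → ℝ) :
    ∑ T ∈ Finset.powersetCard (k+1) (Finset.univ : Finset α), ∑ i ∈ T, f i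
      = ((Fintype.card α - 1).choose k : ℝ) * ∑ i, f i := by
  have h1 : ∀ T : Finset α, ∑ i ∈ T, f i = ∑ i, if i ∈ T then f i else 0 := by
    intro T
    rw [Finset.sum_ite_mem, Finset.univ_inter]
  simp_rw [h1]
  rw [Finset.sum_comm]
  rw [Finset.mul_sum]
  refine Finset.sum_congr rfl fun i _ => ?_
  rw [Finset.sum_ite, Finset.sum_const_zero, add_zero, Finset.sum_const,
    count_mem_aux i k, if_pos (Finset.mem_univ i)]
  simp [mul_comm]

/-- Under monotonicity, the exclusion restriction, and complete randomization,
E[ITT̂] = Ȳ(1) − Ȳ(0) = π_c · τ, expectation over the uniform choice of the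
size-n1 treated subset. -/
theorem stmt_2 (N n1 n0 : ℕ) (hN : 2 ≤ N) (hn1 : 1 ≤ n1) (hn1N : n1 ≤ N - 1)
    (hn0 : n0 = N - n1)
    (Y1 Y0 D1 D0 : Fin N → ℝ)
    (hD1 : ∀ i, D1 i = 0 ∨ D1 i = 1)
    (hD0 : ∀ i, D0 i = 0 ∨ D0 i = 1)
    (mono : ∀ i, D0 i ≤ D1 i)
    (excl : ∀ i, D1 i = D0 i → Y1 i = Y0 i)
    (C : Finset (Fin N)) (hC : ∀ i, i ∈ C ↔ (D1 i = 1 ∧ D0 i = 0))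
    (nc : ℕ) (hnc : nc = C.card) (hnc1 : 1 ≤ nc)
    (πc : ℝ) (hπc : πc = (nc : ℝ) / N)
    (Ybar1 Ybar0 : ℝ)
    (hYbar1 : Ybar1 = (∑ i, Y1 i) / N)
    (hYbar0 : Ybar0 = (∑ i, Y0 i) / N)
    (Ybarc1 Ybarc0 τ : ℝ)
    (hYc1 : Ybarc1 = (∑ i ∈ C, Y1 i) / nc)
    (hYc0 : Ybarc0 = (∑ i ∈ C, Y0 i) / nc)
    (hτ : τ = Ybarc1 - Ybarc0)
    (ITThat : Finset (Fin N) → ℝ)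
    (hITT : ∀ T : Finset (Fin N),
      ITThat T = (∑ i ∈ T, Y1 i) / n1 - (∑ i ∈ Tᶜ, Y0 i) / n0) :
    (∑ T ∈ Finset.powersetCard n1 (Finset.univ : Finset (Fin N)), ITThat T) /
      ((Finset.powersetCard n1 (Finset.univ : Finset (Fin N))).card : ℝ)
        = Ybar1 - Ybar0
    ∧ Ybar1 - Ybar0 = πc * τ := by
  -- basic arithmetic setup
  obtain ⟨m, rfl⟩ : ∃ m, N = m + 1 := ⟨N - 1, by omega⟩
  obtain ⟨j, rfl⟩ : ∃ j, n1 = j + 1 := ⟨n1 - 1, by omega⟩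
  have hjm : j + 1 ≤ m := by omega
  have hcardFin : Fintype.card (Fin (m+1)) = m + 1 := by simp
  set P := Finset.powersetCard (j+1) (Finset.univ : Finset (Fin (m+1))) with hP
  have hPcard : (P.card : ℝ) = ((m+1).choose (j+1) : ℝ) := by
    rw [hP, Finset.card_powersetCard]
    simp
  -- key sums
  have hsum1 : ∑ T ∈ P, ∑ i ∈ T, Y1 i = (m.choose j : ℝ) * ∑ i, Y1 i := by
    have := sum_sum_mem_aux j Y1
    simpa [hcardFin] using this
  have hsum0 : ∑ T ∈ P, ∑ i ∈ Tᶜ, Y0 i = (m.choose (j+1) : ℝ) * ∑ i, Y0 i := by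
    have hcompl : ∀ T : Finset (Fin (m+1)),
        ∑ i ∈ Tᶜ, Y0 i = (∑ i, Y0 i) - ∑ i ∈ T, Y0 i := by
      intro T
      have := Finset.sum_add_sum_compl T Y0
      linarith
    simp_rw [hcompl]
    rw [Finset.sum_sub_distrib]
    have h2 : ∑ T ∈ P, ∑ i ∈ T, Y0 i = (m.choose j : ℝ) * ∑ i, Y0 i := by
      have := sum_sum_mem_aux j Y0
      simpa [hcardFin] using this
    rw [h2, Finset.sum_const, nsmul_eq_mul]
    have : (P.card : ℝ) = (m.choose j : ℝ) + (m.choose (j+1) : ℝ) := by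
      rw [hPcard, Nat.choose_succ_succ]
      push_cast; ring
    rw [this]; ring
  -- combinatorial identities over ℝ
  have hchoose_ne : ((m+1).choose (j+1) : ℝ) ≠ 0 := by
    have : 0 < (m+1).choose (j+1) := Nat.choose_pos (by omega)
    positivity
  have hid1 : ((m:ℝ)+1) * (m.choose j : ℝ) = ((m+1).choose (j+1) : ℝ) * ((j:ℝ)+1) := by
    have := Nat.add_one_mul_choose_eq m j
    exact_mod_cast congrArg (Nat.cast : ℕ → ℝ) this
  have hid2 : (m.choose (j+1) : ℝ) * ((m:ℝ)+1) = ((m+1).choose (j+1) : ℝ) * ((m:ℝ) - j) := by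
    have h := Nat.choose_mul_succ_eq m (j+1)
    have h' : (m.choose (j+1) : ℝ) * ((m:ℝ)+1) = ((m+1).choose (j+1) : ℝ) * ((m + 1 - (j+1) : ℕ) : ℝ) := by
      exact_mod_cast congrArg (Nat.cast : ℕ → ℝ) h
    rw [h']
    congr 1
    have : m + 1 - (j + 1) = m - j := by omega
    rw [this]
    have : (m - j : ℕ) = (m : ℝ) - j := by
      rw [Nat.cast_sub (by omega)]
    rw [this]
  have hn0' : (n0 : ℝ) = (m : ℝ) - j := by
    rw [hn0]
    have : m + 1 - (j + 1) = m - j := by omega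
    rw [this, Nat.cast_sub (by omega)]
  have hn0pos : (0:ℝ) < (m:ℝ) - j := by
    have : (j:ℝ) + 1 ≤ m := by exact_mod_cast hjm
    linarith
  have hNne : ((m:ℝ)+1) ≠ 0 := by positivity
  have hncne : (nc : ℝ) ≠ 0 := by
    have : 0 < nc := hnc1
    positivity
  -- Part 1
  have part1 : (∑ T ∈ P, ITThat T) / (P.card : ℝ) = Ybar1 - Ybar0 := by
    have hsplit : (∑ T ∈ P, ITThat T)
        = ((m.choose j : ℝ) * ∑ i, Y1 i) / ((j:ℝ)+1)
          - ((m.choose (j+1) : ℝ) * ∑ i, Y0 i) / ((m:ℝ) - j) := by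
      simp_rw [hITT]
      rw [Finset.sum_sub_distrib, ← Finset.sum_div, ← Finset.sum_div, hsum1, hsum0, hn0']
      push_cast
      ring
    rw [hsplit, hPcard, hYbar1, hYbar0]
    have hjne : ((j:ℝ)+1) ≠ 0 := by positivity
    have hmjne : ((m:ℝ) - j) ≠ 0 := ne_of_gt hn0pos
    push_cast
    field_simp
    linear_combination (∑ i, Y1 i) * ((m:ℝ) - j) * hid1 - (∑ i, Y0 i) * ((j:ℝ)+1) * hid2
  refine ⟨part1, ?_⟩
  -- Part 2
  have hout : ∀ i ∉ C, Y1 i = Y0 i := by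
    intro i hi
    rw [hC i] at hi
    rcases hD1 i with h1 | h1 <;> rcases hD0 i with h0 | h0
    · exact excl i (h1.trans h0.symm)
    · have := mono i; rw [h1, h0] at this; linarith
    · exact absurd ⟨h1, h0⟩ hi
    · exact excl i (h1.trans h0.symm)
  have hsumC : (∑ i, Y1 i) - (∑ i, Y0 i) = (∑ i ∈ C, Y1 i) - (∑ i ∈ C, Y0 i) := by
    rw [← Finset.sum_sub_distrib, ← Finset.sum_sub_distrib]
    rw [← Finset.sum_subset (Finset.subset_univ C)]
    intro i _ hi
    rw [hout i hi]
    ring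
  rw [hYbar1, hYbar0, hπc, hτ, hYc1, hYc0]
  rw [div_sub_div_same, hsumC]
  push_cast
  field_simp
end

section
/- (First-stage slope.) For the 2SLS weights w_i = (N_g/N_{g,z})(n_z/N), the weighted mean of observed uptake is D̄_w = Σ_i w_i D_i / Σ_i w_i = (n_1/N) D̄_w^obs(1) + (n_0/N) D̄_w^obs(0), the weighted cross-product satisfies Σ_{i=1}^N w_i (D_i − D̄_w)(Z_i − Z̄_w) = (n_1 n_0/N) f̂_PS, and hence the weighted least squares slope coefficient of the observed uptake D on the assignment Z equals β̂_{1,S1} = f̂_PS. -/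
open Finset

/-- First-stage slope: with the 2SLS weights, the weighted mean of observed
uptake is (n1/N) D̄_w^obs(1) + (n0/N) D̄_w^obs(0), the weighted cross-product
of D and Z equals (n1 n0/N) f̂_PS, and hence the WLS slope of D on Z equals
f̂_PS. -/
theorem stmt_6 (N G : ℕ) (hN : 2 ≤ N) (hG : 1 ≤ G)
    (D1 D0 : Fin N → ℝ)
    (hD1 : ∀ i, D1 i = 0 ∨ D1 i = 1)
    (hD0 : ∀ i, D0 i = 0 ∨ D0 i = 1)
    (Z : Fin N → Bool) (s : Fin N → Fin G)
    (n1 n0 : ℕ)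
    (hn1 : n1 = (Finset.univ.filter (fun i => Z i = true)).card) (hn1pos : 1 ≤ n1)
    (hn0 : n0 = N - n1) (hn0pos : 1 ≤ n0)
    (Ng : Fin G → ℕ)
    (hNg : ∀ g, Ng g = (Finset.univ.filter (fun i => s i = g)).card)
    (Ngz : Fin G → Bool → ℕ)
    (hNgz : ∀ g z, Ngz g z = (Finset.univ.filter (fun i => s i = g ∧ Z i = z)).card)
    (hpos : ∀ g z, 1 ≤ Ngz g z)
    (w : Fin N → ℝ)
    (hw : ∀ i, w i = ((Ng (s i) : ℝ) / (Ngz (s i) (Z i) : ℝ)) *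
      ((if Z i then (n1 : ℝ) else (n0 : ℝ)) / N))
    (D : Fin N → ℝ) (hD : ∀ i, D i = if Z i then D1 i else D0 i)
    (zR : Fin N → ℝ) (hzR : ∀ i, zR i = if Z i then 1 else 0)
    (Dgbar : Fin G → Bool → ℝ)
    (hDgbar : ∀ g z, Dgbar g z =
      (∑ i ∈ Finset.univ.filter (fun i => s i = g ∧ Z i = z), D i) / (Ngz g z))
    (Dw : Bool → ℝ)
    (hDw : ∀ z, Dw z = ∑ g, ((Ng g : ℝ) / N) * Dgbar g z)
    (fg : Fin G → ℝ) (hfg : ∀ g, fg g = Dgbar g true - Dgbar g false)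
    (fPS : ℝ) (hfPS : fPS = ∑ g, ((Ng g : ℝ) / N) * fg g)
    (Dbarw Zbarw : ℝ)
    (hDbarw : Dbarw = (∑ i, w i * D i) / (∑ i, w i))
    (hZbarw : Zbarw = (∑ i, w i * zR i) / (∑ i, w i)) :
    Dbarw = ((n1 : ℝ) / N) * Dw true + ((n0 : ℝ) / N) * Dw false
    ∧ (∑ i, w i * (D i - Dbarw) * (zR i - Zbarw)) = ((n1 : ℝ) * n0 / N) * fPS
    ∧ (∑ i, w i * (D i - Dbarw) * (zR i - Zbarw)) /
        (∑ i, w i * (zR i - Zbarw) ^ 2) = fPS := by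

  classical
  -- basic numeric facts
  have hNR : (0:ℝ) < N := by exact_mod_cast Nat.lt_of_lt_of_le (by norm_num) hN
  have hNne : (N:ℝ) ≠ 0 := ne_of_gt hNR
  have hn1R : (0:ℝ) < n1 := by exact_mod_cast hn1pos
  have hn0R : (0:ℝ) < n0 := by exact_mod_cast hn0pos
  have hn1le : n1 ≤ N := by
    rw [hn1]
    calc (Finset.univ.filter (fun i => Z i = true)).card ≤ (Finset.univ : Finset (Fin N)).card :=
          Finset.card_filter_le _ _
      _ = N := by simp
  have hsumN : n1 + n0 = N := by omega
  have hNr : (N:ℝ) = (n1:ℝ) + (n0:ℝ) := by exact_mod_cast hsumN.symm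
  have hNgzne : ∀ g z, (Ngz g z : ℝ) ≠ 0 := by
    intro g z
    have := hpos g z
    positivity
  -- fiberwise decomposition of sums
  have fib : ∀ (f : Fin N → ℝ), (∑ i, f i)
      = ∑ g : Fin G, ∑ z : Bool, ∑ i ∈ Finset.univ.filter (fun i => s i = g ∧ Z i = z), f i := by
    intro f
    rw [← Finset.sum_fiberwise Finset.univ (fun i => (s i, Z i)) f, Fintype.sum_prod_type]
    refine Finset.sum_congr rfl fun g _ => Finset.sum_congr rfl fun z _ => ?_
    refine Finset.sum_congr ?_ (fun _ _ => rfl)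
    ext i
    simp [Prod.ext_iff]
  -- cardinality of each fiber
  have hcard : ∀ g z, (Finset.univ.filter (fun i => s i = g ∧ Z i = z)).card = Ngz g z :=
    fun g z => (hNgz g z).symm
  -- weight is constant on each fiber
  have hwfib : ∀ g z, ∀ i ∈ Finset.univ.filter (fun i => s i = g ∧ Z i = z),
      w i = ((Ng g : ℝ) / (Ngz g z : ℝ)) * ((if z then (n1:ℝ) else (n0:ℝ)) / N) := by
    intro g z i hi
    simp only [Finset.mem_filter] at hi
    rw [hw, hi.2.1, hi.2.2]
  -- sum of D over a fiber
  have hDfib : ∀ g z, (∑ i ∈ Finset.univ.filter (fun i => s i = g ∧ Z i = z), D i)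
      = (Ngz g z : ℝ) * Dgbar g z := by
    intro g z
    rw [hDgbar, mul_div_assoc']
    exact (mul_div_cancel_left₀ _ (hNgzne g z)).symm
  -- fiberwise sums of the various weighted quantities
  have hWfib : ∀ g z, (∑ i ∈ Finset.univ.filter (fun i => s i = g ∧ Z i = z), w i)
      = (Ng g : ℝ) * ((if z then (n1:ℝ) else (n0:ℝ)) / N) := by
    intro g z
    rw [Finset.sum_congr rfl (hwfib g z), Finset.sum_const, hcard, nsmul_eq_mul]
    cases z <;> (field_simp [hNgzne])
  have hWDfib : ∀ g z, (∑ i ∈ Finset.univ.filter (fun i => s i = g ∧ Z i = z), w i * D i)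
      = (Ng g : ℝ) * ((if z then (n1:ℝ) else (n0:ℝ)) / N) * Dgbar g z := by
    intro g z
    have : (∑ i ∈ Finset.univ.filter (fun i => s i = g ∧ Z i = z), w i * D i)
        = (((Ng g : ℝ) / (Ngz g z : ℝ)) * ((if z then (n1:ℝ) else (n0:ℝ)) / N))
          * ∑ i ∈ Finset.univ.filter (fun i => s i = g ∧ Z i = z), D i := by
      rw [Finset.mul_sum]
      exact Finset.sum_congr rfl fun i hi => by rw [hwfib g z i hi]
    rw [this, hDfib]
    cases z <;> (field_simp [hNgzne])
  -- zR is constant on a fiber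
  have hzfib : ∀ g z, ∀ i ∈ Finset.univ.filter (fun i => s i = g ∧ Z i = z),
      zR i = (if z then (1:ℝ) else 0) := by
    intro g z i hi
    simp only [Finset.mem_filter] at hi
    rw [hzR, hi.2.2]
  -- total sum of Ng
  have hNgsum : (∑ g, (Ng g : ℝ)) = N := by
    have : (∑ g, Ng g) = N := by
      simp_rw [hNg]
      rw [← Finset.card_eq_sum_card_fiberwise (fun i _ => Finset.mem_univ (s i))]
      simp
    exact_mod_cast this
  -- total sums
  have SW : (∑ i, w i) = (N:ℝ) := by
    rw [fib w]
    have : ∀ g : Fin G, (∑ z : Bool, ∑ i ∈ Finset.univ.filter (fun i => s i = g ∧ Z i = z), w i)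
        = (Ng g : ℝ) := by
      intro g
      rw [Fintype.sum_bool, hWfib g true, hWfib g false]
      norm_num
      field_simp
      rw [hNr]
    rw [Finset.sum_congr rfl fun g _ => this g, hNgsum]
  have SWD : (∑ i, w i * D i) = (n1:ℝ) * Dw true + (n0:ℝ) * Dw false := by
    rw [fib (fun i => w i * D i)]
    have : ∀ g : Fin G,
        (∑ z : Bool, ∑ i ∈ Finset.univ.filter (fun i => s i = g ∧ Z i = z), w i * D i)
        = (n1:ℝ) * ((Ng g : ℝ) / N * Dgbar g true) + (n0:ℝ) * ((Ng g : ℝ) / N * Dgbar g false) := by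
      intro g
      rw [Fintype.sum_bool, hWDfib g true, hWDfib g false]
      norm_num
      ring
    rw [Finset.sum_congr rfl fun g _ => this g, Finset.sum_add_distrib,
      ← Finset.mul_sum, ← Finset.mul_sum, hDw true, hDw false]
  have SWZ : (∑ i, w i * zR i) = (n1:ℝ) := by
    rw [fib (fun i => w i * zR i)]
    have key : ∀ g : Fin G,
        (∑ z : Bool, ∑ i ∈ Finset.univ.filter (fun i => s i = g ∧ Z i = z), w i * zR i)
        = (n1:ℝ) / N * (Ng g : ℝ) := by
      intro g
      have h1 : ∀ z : Bool, (∑ i ∈ Finset.univ.filter (fun i => s i = g ∧ Z i = z), w i * zR i)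
          = (if z then (1:ℝ) else 0) * ∑ i ∈ Finset.univ.filter (fun i => s i = g ∧ Z i = z), w i := by
        intro z
        rw [Finset.mul_sum]
        exact Finset.sum_congr rfl fun i hi => by rw [hzfib g z i hi]; ring
      rw [Fintype.sum_bool, h1 true, h1 false, hWfib g true]
      norm_num
      ring
    rw [Finset.sum_congr rfl fun g _ => key g, ← Finset.mul_sum, hNgsum]
    field_simp
  have SWDZ : (∑ i, w i * D i * zR i) = (n1:ℝ) * Dw true := by
    rw [fib (fun i => w i * D i * zR i)]
    have key : ∀ g : Fin G,
        (∑ z : Bool, ∑ i ∈ Finset.univ.filter (fun i => s i = g ∧ Z i = z), w i * D i * zR i)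
        = (n1:ℝ) * ((Ng g : ℝ) / N * Dgbar g true) := by
      intro g
      have h1 : ∀ z : Bool, (∑ i ∈ Finset.univ.filter (fun i => s i = g ∧ Z i = z), w i * D i * zR i)
          = (if z then (1:ℝ) else 0)
            * ∑ i ∈ Finset.univ.filter (fun i => s i = g ∧ Z i = z), w i * D i := by
        intro z
        rw [Finset.mul_sum]
        exact Finset.sum_congr rfl fun i hi => by rw [hzfib g z i hi]; ring
      rw [Fintype.sum_bool, h1 true, h1 false, hWDfib g true]
      norm_num
      ring
    rw [Finset.sum_congr rfl fun g _ => key g, ← Finset.mul_sum, hDw true]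
  have hzsq : ∀ i, zR i ^ 2 = zR i := by
    intro i
    rw [hzR]
    by_cases h : Z i <;> simp [h]
  -- fPS = Dw true - Dw false
  have hfPS' : fPS = Dw true - Dw false := by
    rw [hfPS, hDw true, hDw false, ← Finset.sum_sub_distrib]
    exact Finset.sum_congr rfl fun g _ => by rw [hfg]; ring
  -- values of the weighted means
  have hDbarw' : Dbarw = ((n1:ℝ) * Dw true + (n0:ℝ) * Dw false) / N := by
    rw [hDbarw, SWD, SW]
  have hZbarw' : Zbarw = (n1:ℝ) / N := by
    rw [hZbarw, SWZ, SW]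
  -- first claim
  have claim1 : Dbarw = ((n1 : ℝ) / N) * Dw true + ((n0 : ℝ) / N) * Dw false := by
    rw [hDbarw']
    field_simp
  -- cross product
  have hcross : (∑ i, w i * (D i - Dbarw) * (zR i - Zbarw))
      = (∑ i, w i * D i * zR i) - Dbarw * (∑ i, w i * zR i)
        - Zbarw * (∑ i, w i * D i) + Dbarw * Zbarw * (∑ i, w i) := by
    have h : ∀ i, w i * (D i - Dbarw) * (zR i - Zbarw)
        = w i * D i * zR i - Dbarw * (w i * zR i) - Zbarw * (w i * D i)
          + Dbarw * Zbarw * w i := fun i => by ring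
    simp_rw [h, Finset.sum_add_distrib, Finset.sum_sub_distrib, ← Finset.mul_sum]
  have claim2 : (∑ i, w i * (D i - Dbarw) * (zR i - Zbarw)) = ((n1 : ℝ) * n0 / N) * fPS := by
    rw [hcross, SWDZ, SWZ, SWD, SW, hDbarw', hZbarw', hfPS', hNr]
    have h : (n1:ℝ) + n0 ≠ 0 := by positivity
    field_simp
    ring
  -- denominator
  have hden : (∑ i, w i * (zR i - Zbarw) ^ 2) = (n1:ℝ) * n0 / N := by
    have hexp : (∑ i, w i * (zR i - Zbarw) ^ 2)
        = (∑ i, w i * zR i) - 2 * Zbarw * (∑ i, w i * zR i) + Zbarw ^ 2 * (∑ i, w i) := by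
      have h : ∀ i, w i * (zR i - Zbarw) ^ 2
          = w i * zR i - 2 * Zbarw * (w i * zR i) + Zbarw ^ 2 * w i := fun i => by
        linear_combination (w i) * (hzsq i)
      simp_rw [h, Finset.sum_add_distrib, Finset.sum_sub_distrib, ← Finset.mul_sum]
    rw [hexp, SWZ, SW, hZbarw', hNr]
    have h : (n1:ℝ) + n0 ≠ 0 := by positivity
    field_simp
    ring
  refine ⟨claim1, claim2, ?_⟩
  rw [claim2, hden]
  have h1 : (n1:ℝ) * n0 / N ≠ 0 := by positivity
  field_simp
end

section
/- (Second-stage denominator.) For the fitted first-stage uptake values D_i^pred = Z_i D̄_w^obs(1) + (1−Z_i) D̄_w^obs(0) and the 2SLS weights w_i = (N_g/N_{g,z})(n_z/N), the weighted mean of D^pred equals the weighted mean of the observed uptake D, and Σ_{i=1}^N w_i (D_i^pred − D̄_w^pred)² = (n_1 n_0/N) f̂_PS². -/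
open Finset

/-- Second-stage denominator: for the fitted first-stage uptake values
D_i^pred = Z_i D̄_w^obs(1) + (1−Z_i) D̄_w^obs(0) and the 2SLS weights, the
weighted mean of D^pred equals the weighted mean of D, and
Σ w_i (D_i^pred − D̄_w^pred)² = (n1 n0/N) f̂_PS². -/
theorem stmt_8 (N G : ℕ) (hN : 2 ≤ N) (hG : 1 ≤ G)
    (D1 D0 : Fin N → ℝ)
    (hD1 : ∀ i, D1 i = 0 ∨ D1 i = 1)
    (hD0 : ∀ i, D0 i = 0 ∨ D0 i = 1)
    (Z : Fin N → Bool) (s : Fin N → Fin G)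
    (n1 n0 : ℕ)
    (hn1 : n1 = (Finset.univ.filter (fun i => Z i = true)).card) (hn1pos : 1 ≤ n1)
    (hn0 : n0 = N - n1) (hn0pos : 1 ≤ n0)
    (Ng : Fin G → ℕ)
    (hNg : ∀ g, Ng g = (Finset.univ.filter (fun i => s i = g)).card)
    (Ngz : Fin G → Bool → ℕ)
    (hNgz : ∀ g z, Ngz g z = (Finset.univ.filter (fun i => s i = g ∧ Z i = z)).card)
    (hpos : ∀ g z, 1 ≤ Ngz g z)
    (w : Fin N → ℝ)
    (hw : ∀ i, w i = ((Ng (s i) : ℝ) / (Ngz (s i) (Z i) : ℝ)) *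
      ((if Z i then (n1 : ℝ) else (n0 : ℝ)) / N))
    (D : Fin N → ℝ) (hD : ∀ i, D i = if Z i then D1 i else D0 i)
    (zR : Fin N → ℝ) (hzR : ∀ i, zR i = if Z i then 1 else 0)
    (Dgbar : Fin G → Bool → ℝ)
    (hDgbar : ∀ g z, Dgbar g z =
      (∑ i ∈ Finset.univ.filter (fun i => s i = g ∧ Z i = z), D i) / (Ngz g z))
    (Dw : Bool → ℝ)
    (hDw : ∀ z, Dw z = ∑ g, ((Ng g : ℝ) / N) * Dgbar g z)
    (fg : Fin G → ℝ) (hfg : ∀ g, fg g = Dgbar g true - Dgbar g false)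
    (fPS : ℝ) (hfPS : fPS = ∑ g, ((Ng g : ℝ) / N) * fg g)
    (Dpred : Fin N → ℝ)
    (hDpred : ∀ i, Dpred i = zR i * Dw true + (1 - zR i) * Dw false)
    (Dpredbarw : ℝ)
    (hDpredbarw : Dpredbarw = (∑ i, w i * Dpred i) / (∑ i, w i)) :
    Dpredbarw = (∑ i, w i * D i) / (∑ i, w i)
    ∧ (∑ i, w i * (Dpred i - Dpredbarw) ^ 2) = ((n1 : ℝ) * n0 / N) * fPS ^ 2 := by

  have hNne : (N:ℝ) ≠ 0 := by
    have : 0 < N := by omega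
    exact_mod_cast this.ne'
  have hNgzne : ∀ g z, (Ngz g z : ℝ) ≠ 0 := by
    intro g z
    have := hpos g z
    exact_mod_cast (by omega : Ngz g z ≠ 0)
  -- key lemma: sums over {Z = z} factor through strata
  have key : ∀ (z : Bool) (h : Fin N → ℝ),
      ∑ i ∈ univ.filter (fun i => Z i = z), w i * h i
        = ((if z then (n1:ℝ) else n0)/N) *
          ∑ g, ((Ng g : ℝ)/(Ngz g z)) *
            ∑ i ∈ univ.filter (fun i => s i = g ∧ Z i = z), h i := by
    intro z h
    rw [← Finset.sum_fiberwise (univ.filter (fun i => Z i = z)) s (fun i => w i * h i),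
      Finset.mul_sum]
    refine Finset.sum_congr rfl ?_
    intro g _
    rw [Finset.filter_filter]
    have heq : (univ.filter fun i => Z i = z ∧ s i = g)
        = univ.filter fun i => s i = g ∧ Z i = z := by
      apply Finset.filter_congr; intro i _; simp [and_comm]
    rw [heq, Finset.mul_sum, Finset.mul_sum]
    refine Finset.sum_congr rfl ?_
    intro i hi
    simp only [Finset.mem_filter, Finset.mem_univ, true_and] at hi
    rw [hw i, hi.1, hi.2]
    ring
  have NgSum : ∑ g, (Ng g : ℝ) = N := by
    have h1 : ∑ g, ∑ i ∈ univ.filter (fun i => s i = g), (1:ℝ) = ∑ i : Fin N, (1:ℝ) :=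
      Finset.sum_fiberwise _ _ _
    simp only [Finset.sum_const, nsmul_eq_mul, mul_one, Finset.card_univ,
      Fintype.card_fin] at h1
    calc ∑ g, (Ng g : ℝ) = ∑ g, ((univ.filter (fun i => s i = g)).card : ℝ) := by
          refine Finset.sum_congr rfl ?_; intro g _; rw [hNg g]
      _ = (N : ℝ) := h1
  have NgzSum : ∀ g z, ∑ i ∈ univ.filter (fun i => s i = g ∧ Z i = z), (1:ℝ)
      = (Ngz g z : ℝ) := by
    intro g z
    simp [hNgz g z]
  have wsum : ∀ z, ∑ i ∈ univ.filter (fun i => Z i = z), w i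
      = (if z then (n1:ℝ) else n0) := by
    intro z
    have h1 := key z (fun _ => 1)
    simp only [mul_one] at h1
    rw [h1]
    have : ∀ g, ((Ng g : ℝ)/(Ngz g z)) *
        ∑ i ∈ univ.filter (fun i => s i = g ∧ Z i = z), (1:ℝ) = (Ng g : ℝ) := by
      intro g
      rw [NgzSum g z, div_mul_cancel₀ _ (hNgzne g z)]
    rw [Finset.sum_congr rfl (fun g _ => this g), NgSum,
      div_mul_cancel₀ _ hNne]
  have Dsum : ∀ z, ∑ i ∈ univ.filter (fun i => Z i = z), w i * D i
      = (if z then (n1:ℝ) else n0) * Dw z := by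
    intro z
    rw [key z D]
    have : ∀ g, ((Ng g : ℝ)/(Ngz g z)) *
        ∑ i ∈ univ.filter (fun i => s i = g ∧ Z i = z), D i
        = (Ng g : ℝ) * Dgbar g z := by
      intro g
      have hs : ∑ i ∈ univ.filter (fun i => s i = g ∧ Z i = z), D i
          = Dgbar g z * (Ngz g z : ℝ) := by
        rw [hDgbar g z, div_mul_cancel₀ _ (hNgzne g z)]
      rw [hs, mul_comm (Dgbar g z) ((Ngz g z : ℝ)), ← mul_assoc,
        div_mul_cancel₀ _ (hNgzne g z)]
    rw [Finset.sum_congr rfl (fun g _ => this g), hDw z, Finset.mul_sum, Finset.mul_sum]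
    refine Finset.sum_congr rfl ?_
    intro g _
    ring
  have split : ∀ f : Fin N → ℝ, ∑ i, f i
      = ∑ i ∈ univ.filter (fun i => Z i = true), f i
        + ∑ i ∈ univ.filter (fun i => Z i = false), f i := by
    intro f
    rw [← Finset.sum_filter_add_sum_filter_not univ (fun i => Z i = true) f]
    congr 1
    apply Finset.sum_congr _ (fun _ _ => rfl)
    apply Finset.filter_congr; intro i _; simp
  have hDpred' : ∀ i, Dpred i = if Z i then Dw true else Dw false := by
    intro i
    rw [hDpred, hzR]
    cases Z i <;> simp
  -- total weight
  have hn1N : n1 ≤ N := by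
    rw [hn1]
    calc (univ.filter (fun i => Z i = true)).card ≤ (univ : Finset (Fin N)).card :=
        Finset.card_filter_le _ _
      _ = N := by simp
  have hNsum : (n1:ℝ) + (n0:ℝ) = N := by
    have : n1 + n0 = N := by omega
    exact_mod_cast this
  have wtot : ∑ i, w i = (N:ℝ) := by
    rw [split w, wsum true, wsum false]
    simpa using hNsum
  -- weighted sums of Dpred and D
  have sumDpred : ∑ i, w i * Dpred i = (n1:ℝ) * Dw true + (n0:ℝ) * Dw false := by
    rw [split (fun i => w i * Dpred i)]
    have h1 : ∑ i ∈ univ.filter (fun i => Z i = true), w i * Dpred i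
        = (n1:ℝ) * Dw true := by
      have : ∀ i ∈ univ.filter (fun i => Z i = true), w i * Dpred i = w i * Dw true := by
        intro i hi
        simp only [Finset.mem_filter] at hi
        rw [hDpred' i, hi.2]
        simp
      rw [Finset.sum_congr rfl this, ← Finset.sum_mul, wsum true]
      simp
    have h0 : ∑ i ∈ univ.filter (fun i => Z i = false), w i * Dpred i
        = (n0:ℝ) * Dw false := by
      have : ∀ i ∈ univ.filter (fun i => Z i = false), w i * Dpred i = w i * Dw false := by
        intro i hi
        simp only [Finset.mem_filter] at hi
        rw [hDpred' i, hi.2]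
        simp
      rw [Finset.sum_congr rfl this, ← Finset.sum_mul, wsum false]
      simp
    rw [h1, h0]
  have sumD : ∑ i, w i * D i = (n1:ℝ) * Dw true + (n0:ℝ) * Dw false := by
    rw [split (fun i => w i * D i), Dsum true, Dsum false]
    simp
  have hfPSeq : fPS = Dw true - Dw false := by
    rw [hfPS, hDw true, hDw false, ← Finset.sum_sub_distrib]
    refine Finset.sum_congr rfl ?_
    intro g _
    rw [hfg g]
    ring
  have hm : Dpredbarw = ((n1:ℝ) * Dw true + (n0:ℝ) * Dw false) / N := by
    rw [hDpredbarw, sumDpred, wtot]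
  constructor
  · rw [hm, sumD, wtot]
  · have hvar : ∑ i, w i * (Dpred i - Dpredbarw) ^ 2
        = (n1:ℝ) * (Dw true - Dpredbarw)^2 + (n0:ℝ) * (Dw false - Dpredbarw)^2 := by
      rw [split (fun i => w i * (Dpred i - Dpredbarw)^2)]
      congr 1
      · have : ∀ i ∈ univ.filter (fun i => Z i = true),
            w i * (Dpred i - Dpredbarw)^2 = w i * (Dw true - Dpredbarw)^2 := by
          intro i hi
          simp only [Finset.mem_filter] at hi
          rw [hDpred' i, hi.2]
          simp
        rw [Finset.sum_congr rfl this, ← Finset.sum_mul, wsum true]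
        simp
      · have : ∀ i ∈ univ.filter (fun i => Z i = false),
            w i * (Dpred i - Dpredbarw)^2 = w i * (Dw false - Dpredbarw)^2 := by
          intro i hi
          simp only [Finset.mem_filter] at hi
          rw [hDpred' i, hi.2]
          simp
        rw [Finset.sum_congr rfl this, ← Finset.sum_mul, wsum false]
        simp
    rw [hvar, hm, hfPSeq]
    have hN' : (N:ℝ) = (n1:ℝ) + n0 := hNsum.symm
    field_simp
    rw [hN']
    ring
end

section
/- (Second-stage numerator.) For the fitted first-stage uptake values D_i^pred = Z_i D̄_w^obs(1) + (1−Z_i) D̄_w^obs(0), the observed outcomes Y_i, and the 2SLS weights w_i = (N_g/N_{g,z})(n_z/N), the weighted cross-product satisfies Σ_{i=1}^N w_i (D_i^pred − D̄_w^pred)(Y_i − Ȳ_w) = (n_1 n_0/N) f̂_PS · ITT̂_PS. -/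
open Finset

/-- Second-stage numerator: for the fitted first-stage uptake values, observed
outcomes Y, and 2SLS weights, the weighted cross-product satisfies
Σ w_i (D_i^pred − D̄_w^pred)(Y_i − Ȳ_w) = (n1 n0/N) f̂_PS ITT̂_PS. -/
theorem stmt_9 (N G : ℕ) (hN : 2 ≤ N) (hG : 1 ≤ G)
    (Y1 Y0 D1 D0 : Fin N → ℝ)
    (hD1 : ∀ i, D1 i = 0 ∨ D1 i = 1)
    (hD0 : ∀ i, D0 i = 0 ∨ D0 i = 1)
    (Z : Fin N → Bool) (s : Fin N → Fin G)
    (n1 n0 : ℕ)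
    (hn1 : n1 = (Finset.univ.filter (fun i => Z i = true)).card) (hn1pos : 1 ≤ n1)
    (hn0 : n0 = N - n1) (hn0pos : 1 ≤ n0)
    (Ng : Fin G → ℕ)
    (hNg : ∀ g, Ng g = (Finset.univ.filter (fun i => s i = g)).card)
    (Ngz : Fin G → Bool → ℕ)
    (hNgz : ∀ g z, Ngz g z = (Finset.univ.filter (fun i => s i = g ∧ Z i = z)).card)
    (hpos : ∀ g z, 1 ≤ Ngz g z)
    (w : Fin N → ℝ)
    (hw : ∀ i, w i = ((Ng (s i) : ℝ) / (Ngz (s i) (Z i) : ℝ)) *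
      ((if Z i then (n1 : ℝ) else (n0 : ℝ)) / N))
    (D : Fin N → ℝ) (hD : ∀ i, D i = if Z i then D1 i else D0 i)
    (Y : Fin N → ℝ) (hY : ∀ i, Y i = if Z i then Y1 i else Y0 i)
    (zR : Fin N → ℝ) (hzR : ∀ i, zR i = if Z i then 1 else 0)
    (Dgbar : Fin G → Bool → ℝ)
    (hDgbar : ∀ g z, Dgbar g z =
      (∑ i ∈ Finset.univ.filter (fun i => s i = g ∧ Z i = z), D i) / (Ngz g z))
    (Ygbar : Fin G → Bool → ℝ)
    (hYgbar : ∀ g z, Ygbar g z =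
      (∑ i ∈ Finset.univ.filter (fun i => s i = g ∧ Z i = z), Y i) / (Ngz g z))
    (Dw : Bool → ℝ)
    (hDw : ∀ z, Dw z = ∑ g, ((Ng g : ℝ) / N) * Dgbar g z)
    (fg : Fin G → ℝ) (hfg : ∀ g, fg g = Dgbar g true - Dgbar g false)
    (fPS : ℝ) (hfPS : fPS = ∑ g, ((Ng g : ℝ) / N) * fg g)
    (ITTg : Fin G → ℝ) (hITTg : ∀ g, ITTg g = Ygbar g true - Ygbar g false)
    (ITTPS : ℝ) (hITTPS : ITTPS = ∑ g, ((Ng g : ℝ) / N) * ITTg g)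
    (Dpred : Fin N → ℝ)
    (hDpred : ∀ i, Dpred i = zR i * Dw true + (1 - zR i) * Dw false)
    (Dpredbarw Ybarw : ℝ)
    (hDpredbarw : Dpredbarw = (∑ i, w i * Dpred i) / (∑ i, w i))
    (hYbarw : Ybarw = (∑ i, w i * Y i) / (∑ i, w i)) :
    (∑ i, w i * (Dpred i - Dpredbarw) * (Y i - Ybarw))
      = ((n1 : ℝ) * n0 / N) * fPS * ITTPS := by

  classical
  have hNne : (N:ℝ) ≠ 0 := Nat.cast_ne_zero.mpr (by omega)
  have hNgzne : ∀ g z, (Ngz g z : ℝ) ≠ 0 := fun g z =>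
    Nat.cast_ne_zero.mpr (by have := hpos g z; omega)
  -- filter identity
  have hflt : ∀ (g : Fin G) (z : Bool),
      (Finset.univ.filter (fun i => Z i = z)).filter (fun i => s i = g)
        = Finset.univ.filter (fun i => s i = g ∧ Z i = z) := by
    intro g z; ext i; simp [and_comm]
  -- cell decomposition
  have hcell : ∀ (z : Bool) (f : Fin N → ℝ),
      (∑ i ∈ Finset.univ.filter (fun i => Z i = z), w i * f i)
        = ∑ g, ((Ng g : ℝ)/(Ngz g z)) * ((if z then (n1:ℝ) else n0)/N)
            * ∑ i ∈ Finset.univ.filter (fun i => s i = g ∧ Z i = z), f i := by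
    intro z f
    rw [← Finset.sum_fiberwise_of_maps_to (g := s) (t := Finset.univ)
      (fun i _ => Finset.mem_univ _) (fun i => w i * f i)]
    refine Finset.sum_congr rfl fun g _ => ?_
    rw [hflt, Finset.mul_sum]
    refine Finset.sum_congr rfl fun i hi => ?_
    simp only [Finset.mem_filter] at hi
    rw [hw i, hi.2.1, hi.2.2]
  have hcell1 : ∀ (g : Fin G) (z : Bool),
      (∑ i ∈ Finset.univ.filter (fun i => s i = g ∧ Z i = z), (1:ℝ)) = Ngz g z := by
    intro g z; rw [Finset.sum_const, hNgz]; simp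
  have hcellY : ∀ (g : Fin G) (z : Bool),
      (∑ i ∈ Finset.univ.filter (fun i => s i = g ∧ Z i = z), Y i)
        = Ygbar g z * Ngz g z := by
    intro g z; rw [hYgbar, div_mul_cancel₀ _ (hNgzne g z)]
  have hSumNg : (∑ g, (Ng g : ℝ)) = N := by
    have h : ∑ g, Ng g = N := by
      simp only [hNg]
      have h2 := Finset.card_eq_sum_card_fiberwise (f := s)
        (s := (Finset.univ : Finset (Fin N))) (t := Finset.univ)
        (fun i _ => Finset.mem_univ _)
      simpa using h2.symm
    exact_mod_cast congrArg (Nat.cast : ℕ → ℝ) h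
  -- sums over the two arms
  have sumWz : ∀ z : Bool,
      (∑ i ∈ Finset.univ.filter (fun i => Z i = z), w i)
        = (if z then (n1:ℝ) else n0) := by
    intro z
    have h := hcell z (fun _ => 1)
    simp only [mul_one] at h
    rw [h]
    have : ∀ g : Fin G, ((Ng g : ℝ)/(Ngz g z)) * ((if z then (n1:ℝ) else n0)/N)
        * (∑ i ∈ Finset.univ.filter (fun i => s i = g ∧ Z i = z), (1:ℝ))
        = ((if z then (n1:ℝ) else n0)/N) * Ng g := by
      intro g; rw [hcell1]
      have hnz := hNgzne g z
      field_simp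
    rw [Finset.sum_congr rfl fun g _ => this g, ← Finset.mul_sum, hSumNg]
    field_simp
  have sumYz : ∀ z : Bool,
      (∑ i ∈ Finset.univ.filter (fun i => Z i = z), w i * Y i)
        = ((if z then (n1:ℝ) else n0)/N) * ∑ g, (Ng g : ℝ) * Ygbar g z := by
    intro z
    rw [hcell z Y, Finset.mul_sum]
    refine Finset.sum_congr rfl fun g _ => ?_
    rw [hcellY]
    have hnz := hNgzne g z
    field_simp
  -- splitting a full sum into the two arms
  have hsplit : ∀ f : Fin N → ℝ, (∑ i, w i * f i)
      = (∑ i ∈ Finset.univ.filter (fun i => Z i = true), w i * f i)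
        + (∑ i ∈ Finset.univ.filter (fun i => Z i = false), w i * f i) := by
    intro f
    rw [← Finset.sum_filter_add_sum_filter_not Finset.univ (fun i => Z i = true)
      (fun i => w i * f i)]
    congr 1
    apply Finset.sum_congr _ (fun _ _ => rfl)
    ext i; simp
  have hDpred' : ∀ i, Dpred i = if Z i then Dw true else Dw false := by
    intro i; rw [hDpred, hzR]; cases Z i <;> simp
  have repl : ∀ (z : Bool) (f : Fin N → ℝ),
      (∑ i ∈ Finset.univ.filter (fun i => Z i = z), w i * (Dpred i * f i))
        = Dw z * ∑ i ∈ Finset.univ.filter (fun i => Z i = z), w i * f i := by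
    intro z f
    rw [Finset.mul_sum]
    refine Finset.sum_congr rfl fun i hi => ?_
    simp only [Finset.mem_filter] at hi
    rw [hDpred' i, hi.2]
    cases z <;> simp <;> ring
  set A1 : ℝ := ∑ g, (Ng g : ℝ) * Ygbar g true with hA1
  set A0 : ℝ := ∑ g, (Ng g : ℝ) * Ygbar g false with hA0
  have SW : (∑ i, w i) = (n1:ℝ) + n0 := by
    have h := hsplit (fun _ => 1)
    simp only [mul_one] at h
    rw [h, sumWz true, sumWz false]
    simp
  have SY : (∑ i, w i * Y i) = ((n1:ℝ)/N) * A1 + ((n0:ℝ)/N) * A0 := by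
    rw [hsplit Y, sumYz true, sumYz false]; simp [hA1, hA0]
  have SDp : (∑ i, w i * Dpred i) = Dw true * (n1:ℝ) + Dw false * (n0:ℝ) := by
    have h := hsplit Dpred
    have e1 := repl true (fun _ => 1)
    have e0 := repl false (fun _ => 1)
    simp only [mul_one] at e1 e0
    rw [h, e1, e0, sumWz true, sumWz false]
    simp
  have SDpY : (∑ i, w i * (Dpred i * Y i))
      = Dw true * (((n1:ℝ)/N) * A1) + Dw false * (((n0:ℝ)/N) * A0) := by
    rw [hsplit (fun i => Dpred i * Y i), repl true Y, repl false Y,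
      sumYz true, sumYz false]
    simp [hA1, hA0]
  have hfPS' : fPS = Dw true - Dw false := by
    rw [hfPS, hDw, hDw, ← Finset.sum_sub_distrib]
    refine Finset.sum_congr rfl fun g _ => ?_
    rw [hfg]; ring
  have hITT' : ITTPS = (A1 - A0)/N := by
    rw [hITTPS, hA1, hA0, ← Finset.sum_sub_distrib, Finset.sum_div]
    refine Finset.sum_congr rfl fun g _ => ?_
    rw [hITTg]; ring
  have expand : (∑ i, w i * (Dpred i - Dpredbarw) * (Y i - Ybarw))
      = (∑ i, w i * (Dpred i * Y i)) - Ybarw * (∑ i, w i * Dpred i)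
        - Dpredbarw * (∑ i, w i * Y i) + Dpredbarw * Ybarw * (∑ i, w i) := by
    have h : ∀ i, w i * (Dpred i - Dpredbarw) * (Y i - Ybarw)
        = w i * (Dpred i * Y i) - Ybarw * (w i * Dpred i)
          - Dpredbarw * (w i * Y i) + Dpredbarw * Ybarw * w i := fun i => by ring
    simp only [h, Finset.sum_add_distrib, Finset.sum_sub_distrib, ← Finset.mul_sum]
  have hn0R : (n0:ℝ) = (N:ℝ) - n1 := by
    have hle : n1 ≤ N := by
      rw [hn1]
      exact le_trans (Finset.card_filter_le _ _) (le_of_eq (by simp))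
    rw [hn0]
    push_cast [hle]
    ring
  rw [expand, SDpY, SDp, SY, SW, hDpredbarw, hYbarw, SDp, SY, SW, hfPS', hITT',
    hn0R]
  have hn1ne : (n1:ℝ) ≠ 0 := Nat.cast_ne_zero.mpr (by omega)
  have hNn : (n1:ℝ) + ((N:ℝ) - n1) = N := by ring
  rw [hNn]
  field_simp
  ring
end

section
/- (Lemma 1: 2SLS equivalence.) If f̂_PS ≠ 0, then the slope coefficient from the second-stage weighted least squares regression of the observed outcome Y on the first-stage fitted uptake D^pred, with the 2SLS weights w_i = (N_g/N_{g,z})(n_z/N) in both stages, equals the IV-across estimator: β̂_{1,S2} = ITT̂_PS / f̂_PS = IV-a. -/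
open Finset

/-- Lemma 1 (2SLS equivalence): if f̂_PS ≠ 0, the second-stage weighted least
squares slope of observed Y on first-stage fitted uptake D^pred, with the
2SLS weights, equals the IV-across estimator ITT̂_PS / f̂_PS. -/
theorem stmt_10 (N G : ℕ) (hN : 2 ≤ N) (hG : 1 ≤ G)
    (Y1 Y0 D1 D0 : Fin N → ℝ)
    (hD1 : ∀ i, D1 i = 0 ∨ D1 i = 1)
    (hD0 : ∀ i, D0 i = 0 ∨ D0 i = 1)
    (Z : Fin N → Bool) (s : Fin N → Fin G)
    (n1 n0 : ℕ)
    (hn1 : n1 = (Finset.univ.filter (fun i => Z i = true)).card) (hn1pos : 1 ≤ n1)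
    (hn0 : n0 = N - n1) (hn0pos : 1 ≤ n0)
    (Ng : Fin G → ℕ)
    (hNg : ∀ g, Ng g = (Finset.univ.filter (fun i => s i = g)).card)
    (Ngz : Fin G → Bool → ℕ)
    (hNgz : ∀ g z, Ngz g z = (Finset.univ.filter (fun i => s i = g ∧ Z i = z)).card)
    (hpos : ∀ g z, 1 ≤ Ngz g z)
    (w : Fin N → ℝ)
    (hw : ∀ i, w i = ((Ng (s i) : ℝ) / (Ngz (s i) (Z i) : ℝ)) *
      ((if Z i then (n1 : ℝ) else (n0 : ℝ)) / N))
    (D : Fin N → ℝ) (hD : ∀ i, D i = if Z i then D1 i else D0 i)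
    (Y : Fin N → ℝ) (hY : ∀ i, Y i = if Z i then Y1 i else Y0 i)
    (zR : Fin N → ℝ) (hzR : ∀ i, zR i = if Z i then 1 else 0)
    (Dgbar : Fin G → Bool → ℝ)
    (hDgbar : ∀ g z, Dgbar g z =
      (∑ i ∈ Finset.univ.filter (fun i => s i = g ∧ Z i = z), D i) / (Ngz g z))
    (Ygbar : Fin G → Bool → ℝ)
    (hYgbar : ∀ g z, Ygbar g z =
      (∑ i ∈ Finset.univ.filter (fun i => s i = g ∧ Z i = z), Y i) / (Ngz g z))
    (Dw : Bool → ℝ)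
    (hDw : ∀ z, Dw z = ∑ g, ((Ng g : ℝ) / N) * Dgbar g z)
    (fg : Fin G → ℝ) (hfg : ∀ g, fg g = Dgbar g true - Dgbar g false)
    (fPS : ℝ) (hfPS : fPS = ∑ g, ((Ng g : ℝ) / N) * fg g)
    (ITTg : Fin G → ℝ) (hITTg : ∀ g, ITTg g = Ygbar g true - Ygbar g false)
    (ITTPS : ℝ) (hITTPS : ITTPS = ∑ g, ((Ng g : ℝ) / N) * ITTg g)
    (Dpred : Fin N → ℝ)
    (hDpred : ∀ i, Dpred i = zR i * Dw true + (1 - zR i) * Dw false)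
    (Dpredbarw Ybarw : ℝ)
    (hDpredbarw : Dpredbarw = (∑ i, w i * Dpred i) / (∑ i, w i))
    (hYbarw : Ybarw = (∑ i, w i * Y i) / (∑ i, w i))
    (hfPSne : fPS ≠ 0)
    (β1S2 : ℝ)
    (hβ1S2 : β1S2 = (∑ i, w i * (Y i - Ybarw) * (Dpred i - Dpredbarw)) /
      (∑ i, w i * (Dpred i - Dpredbarw) ^ 2)) :
    β1S2 = ITTPS / fPS := by
  classical
  have hNpos : (0:ℝ) < N := by
    have : 0 < N := by omega
    exact_mod_cast this
  have hmne : (N:ℝ) ≠ 0 := ne_of_gt hNpos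
  have hpR : (0:ℝ) < n1 := by exact_mod_cast hn1pos
  have hqR : (0:ℝ) < n0 := by exact_mod_cast hn0pos
  have hn1le : n1 ≤ N := by
    rw [hn1]
    simpa using Finset.card_filter_le Finset.univ (fun i => Z i = true)
  have hsumn : (n1:ℝ) + n0 = N := by
    have : n1 + n0 = N := by omega
    exact_mod_cast this
  have hNgzne : ∀ g z, (Ngz g z : ℝ) ≠ 0 := fun g z =>
    Nat.cast_ne_zero.mpr (by have := hpos g z; omega)
  have hNgsum : ∑ g, (Ng g : ℝ) = N := by
    have h1 : (Finset.univ : Finset (Fin N)).card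
        = ∑ g, (Finset.univ.filter (fun i => s i = g)).card :=
      Finset.card_eq_sum_card_fiberwise (fun x _ => Finset.mem_univ (s x))
    have h2 : ∑ g, Ng g = N := by
      simp only [hNg]
      simpa using h1.symm
    exact_mod_cast h2
  have hfiber : ∀ (z : Bool) (F : Fin N → ℝ),
      ∑ i ∈ Finset.univ.filter (fun i => Z i = z), F i
        = ∑ g, ∑ i ∈ Finset.univ.filter (fun i => s i = g ∧ Z i = z), F i := by
    intro z F
    rw [← Finset.sum_fiberwise (Finset.univ.filter (fun i => Z i = z)) s F]
    refine Finset.sum_congr rfl fun g _ => ?_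
    refine Finset.sum_congr ?_ fun _ _ => rfl
    ext i
    simp [Finset.mem_filter, and_comm]
  have hsplit : ∀ F : Fin N → ℝ, ∑ i, F i =
      (∑ i ∈ Finset.univ.filter (fun i => Z i = true), F i)
      + (∑ i ∈ Finset.univ.filter (fun i => Z i = false), F i) := by
    intro F
    rw [← Finset.sum_filter_add_sum_filter_not Finset.univ (fun i => Z i = true) F]
    congr 1
    refine Finset.sum_congr ?_ fun _ _ => rfl
    ext i
    simp
  have hwconst : ∀ (g : Fin G) (z : Bool), ∀ i ∈ Finset.univ.filter (fun i => s i = g ∧ Z i = z),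
      w i = ((Ng g : ℝ) / (Ngz g z : ℝ)) * ((if z then (n1:ℝ) else (n0:ℝ)) / N) := by
    intro g z i hi
    simp only [Finset.mem_filter, Finset.mem_univ, true_and] at hi
    rw [hw i, hi.1, hi.2]
  have hcard : ∀ (g : Fin G) (z : Bool),
      (Finset.univ.filter (fun i => s i = g ∧ Z i = z)).card = Ngz g z :=
    fun g z => (hNgz g z).symm
  have hSw : ∀ z : Bool, ∑ i ∈ Finset.univ.filter (fun i => Z i = z), w i
      = (if z then (n1:ℝ) else (n0:ℝ)) := by
    intro z
    rw [hfiber z w]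
    have hg : ∀ g ∈ (Finset.univ : Finset (Fin G)),
        ∑ i ∈ Finset.univ.filter (fun i => s i = g ∧ Z i = z), w i
        = (Ng g : ℝ) * ((if z then (n1:ℝ) else (n0:ℝ)) / N) := by
      intro g _
      rw [Finset.sum_congr rfl (hwconst g z), Finset.sum_const, hcard, nsmul_eq_mul]
      have hz := hNgzne g z
      field_simp
    rw [Finset.sum_congr rfl hg, ← Finset.sum_mul, hNgsum]
    field_simp
  have hSY : ∀ (g : Fin G) (z : Bool),
      ∑ i ∈ Finset.univ.filter (fun i => s i = g ∧ Z i = z), Y i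
        = (Ngz g z : ℝ) * Ygbar g z := by
    intro g z
    rw [hYgbar g z]
    have hz := hNgzne g z
    field_simp
  have hSwY : ∀ z : Bool, ∑ i ∈ Finset.univ.filter (fun i => Z i = z), w i * Y i
      = ((if z then (n1:ℝ) else (n0:ℝ)) / N) * ∑ g, (Ng g : ℝ) * Ygbar g z := by
    intro z
    rw [hfiber z (fun i => w i * Y i)]
    have hg : ∀ g ∈ (Finset.univ : Finset (Fin G)),
        ∑ i ∈ Finset.univ.filter (fun i => s i = g ∧ Z i = z), w i * Y i
        = ((if z then (n1:ℝ) else (n0:ℝ)) / N) * ((Ng g : ℝ) * Ygbar g z) := by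
      intro g _
      have h1 : ∀ i ∈ Finset.univ.filter (fun i => s i = g ∧ Z i = z),
          w i * Y i = ((Ng g : ℝ) / (Ngz g z : ℝ)) * ((if z then (n1:ℝ) else (n0:ℝ)) / N) * Y i :=
        fun i hi => by rw [hwconst g z i hi]
      rw [Finset.sum_congr rfl h1, ← Finset.mul_sum, hSY g z]
      have hz := hNgzne g z
      field_simp
    rw [Finset.sum_congr rfl hg, ← Finset.mul_sum]
  have hDp : ∀ i, Dpred i = Dw (Z i) := by
    intro i
    rw [hDpred i, hzR i]
    cases Z i <;> norm_num
  have hSwtot : ∑ i, w i = (N : ℝ) := by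
    rw [hsplit w, hSw true, hSw false]
    simpa using hsumn
  have hSwYtot : ∑ i, w i * Y i
      = ((n1:ℝ)/N) * (∑ g, (Ng g:ℝ) * Ygbar g true)
        + ((n0:ℝ)/N) * (∑ g, (Ng g:ℝ) * Ygbar g false) := by
    rw [hsplit (fun i => w i * Y i), hSwY true, hSwY false]
    norm_num
  have hSwDz : ∀ z : Bool, ∑ i ∈ Finset.univ.filter (fun i => Z i = z), w i * Dpred i
      = Dw z * (if z then (n1:ℝ) else (n0:ℝ)) := by
    intro z
    have h1 : ∀ i ∈ Finset.univ.filter (fun i => Z i = z), w i * Dpred i = Dw z * w i := by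
      intro i hi
      simp only [Finset.mem_filter, Finset.mem_univ, true_and] at hi
      rw [hDp i, hi, mul_comm]
    rw [Finset.sum_congr rfl h1, ← Finset.mul_sum, hSw z]
  have hSwDtot : ∑ i, w i * Dpred i = Dw true * n1 + Dw false * n0 := by
    rw [hsplit (fun i => w i * Dpred i), hSwDz true, hSwDz false]
    norm_num
  have hfPS' : fPS = Dw true - Dw false := by
    rw [hfPS, hDw true, hDw false, ← Finset.sum_sub_distrib]
    refine Finset.sum_congr rfl fun g _ => ?_
    rw [hfg g]
    ring
  have hITT' : (N:ℝ) * ITTPS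
      = (∑ g, (Ng g:ℝ) * Ygbar g true) - (∑ g, (Ng g:ℝ) * Ygbar g false) := by
    rw [hITTPS, Finset.mul_sum, ← Finset.sum_sub_distrib]
    refine Finset.sum_congr rfl fun g _ => ?_
    rw [hITTg g]
    field_simp
  have hNumz : ∀ z : Bool, ∑ i ∈ Finset.univ.filter (fun i => Z i = z),
      w i * (Y i - Ybarw) * (Dpred i - Dpredbarw)
      = (Dw z - Dpredbarw) * ((∑ i ∈ Finset.univ.filter (fun i => Z i = z), w i * Y i)
          - Ybarw * (if z then (n1:ℝ) else (n0:ℝ))) := by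
    intro z
    have h1 : ∀ i ∈ Finset.univ.filter (fun i => Z i = z),
        w i * (Y i - Ybarw) * (Dpred i - Dpredbarw)
        = (Dw z - Dpredbarw) * (w i * Y i - Ybarw * w i) := by
      intro i hi
      simp only [Finset.mem_filter, Finset.mem_univ, true_and] at hi
      rw [hDp i, hi]
      ring
    rw [Finset.sum_congr rfl h1, ← Finset.mul_sum, Finset.sum_sub_distrib, ← Finset.mul_sum,
      hSw z]
  have hDenz : ∀ z : Bool, ∑ i ∈ Finset.univ.filter (fun i => Z i = z),
      w i * (Dpred i - Dpredbarw) ^ 2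
      = (Dw z - Dpredbarw) ^ 2 * (if z then (n1:ℝ) else (n0:ℝ)) := by
    intro z
    have h1 : ∀ i ∈ Finset.univ.filter (fun i => Z i = z),
        w i * (Dpred i - Dpredbarw) ^ 2 = (Dw z - Dpredbarw) ^ 2 * w i := by
      intro i hi
      rw [hDp i]
      simp only [Finset.mem_filter, Finset.mem_univ, true_and] at hi
      rw [hi]
      ring
    rw [Finset.sum_congr rfl h1, ← Finset.mul_sum, hSw z]
  set a1 := ∑ g, (Ng g:ℝ) * Ygbar g true with ha1
  set a0 := ∑ g, (Ng g:ℝ) * Ygbar g false with ha0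
  set d1 := Dw true with hd1
  set d0 := Dw false with hd0
  have hDb : Dpredbarw = (d1 * n1 + d0 * n0) / N := by
    rw [hDpredbarw, hSwDtot, hSwtot]
  have hYb : Ybarw = (((n1:ℝ)/N) * a1 + ((n0:ℝ)/N) * a0) / N := by
    rw [hYbarw, hSwYtot, hSwtot]
  have hpqne : ((n1:ℝ) + n0) ≠ 0 := ne_of_gt (by linarith)
  have hDenval : (∑ i, w i * (Dpred i - Dpredbarw) ^ 2) = fPS ^ 2 * n1 * n0 / N := by
    rw [hsplit (fun i => w i * (Dpred i - Dpredbarw) ^ 2), hDenz true, hDenz false, hDb, hfPS']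
    norm_num
    rw [← hsumn]
    field_simp
    ring
  have hNumval : (∑ i, w i * (Y i - Ybarw) * (Dpred i - Dpredbarw))
      = fPS * (a1 - a0) * n1 * n0 / N ^ 2 := by
    rw [hsplit (fun i => w i * (Y i - Ybarw) * (Dpred i - Dpredbarw)), hNumz true, hNumz false,
      hSwY true, hSwY false, hYb, hDb, hfPS']
    norm_num
    rw [← hsumn]
    field_simp
    ring
  have hdenne : fPS ^ 2 * (n1:ℝ) * n0 / N ≠ 0 := by
    apply div_ne_zero _ hmne
    exact mul_ne_zero (mul_ne_zero (pow_ne_zero 2 hfPSne) (ne_of_gt hpR)) (ne_of_gt hqR)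
  rw [hβ1S2, hNumval, hDenval, div_eq_div_iff hdenne hfPSne, ← hITT']
  field_simp
end

section
/- Under monotonicity, the Neyman variance expression for the compliance-rate estimator simplifies to S²_D(1)/n_1 + S²_D(0)/n_0 − S²_D(01)/N = (1/(N−1)) ( π_n(1−π_n)/p + π_a(1−π_a)/(1−p) − π_c(1−π_c) ), where p = n_1/N, n_0 = N − n_1, S²_D(z) = (1/(N−1)) Σ_i (D_i(z) − D̄(z))², and S²_D(01) = (1/(N−1)) Σ_i (D_i(1) − D_i(0) − D̄(1) + D̄(0))². -/
open Finset

set_option maxHeartbeats 1000000 in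
/-- Under monotonicity, the Neyman variance expression for the compliance-rate
estimator simplifies: S²_D(1)/n_1 + S²_D(0)/n_0 − S²_D(01)/N
= (1/(N−1)) ( π_n(1−π_n)/p + π_a(1−π_a)/(1−p) − π_c(1−π_c) ). -/
theorem stmt_13 (N n1 n0 : ℕ) (hN : 2 ≤ N) (hn1 : 1 ≤ n1) (hn1N : n1 ≤ N - 1)
    (hn0 : n0 = N - n1)
    (D1 D0 : Fin N → ℝ)
    (hD1 : ∀ i, D1 i = 0 ∨ D1 i = 1)
    (hD0 : ∀ i, D0 i = 0 ∨ D0 i = 1)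
    (mono : ∀ i, D0 i ≤ D1 i)
    (C A Nv : Finset (Fin N))
    (hC : ∀ i, i ∈ C ↔ (D1 i = 1 ∧ D0 i = 0))
    (hA : ∀ i, i ∈ A ↔ (D1 i = 1 ∧ D0 i = 1))
    (hNv : ∀ i, i ∈ Nv ↔ (D1 i = 0 ∧ D0 i = 0))
    (πc πa πn : ℝ)
    (hπc : πc = (C.card : ℝ) / N)
    (hπa : πa = (A.card : ℝ) / N)
    (hπn : πn = (Nv.card : ℝ) / N)
    (p : ℝ) (hp : p = (n1 : ℝ) / N)
    (Dbar1 Dbar0 : ℝ)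
    (hDbar1 : Dbar1 = (∑ i, D1 i) / N)
    (hDbar0 : Dbar0 = (∑ i, D0 i) / N)
    (SD1 SD0 SD01 : ℝ)
    (hSD1 : SD1 = (1 / ((N : ℝ) - 1)) * ∑ i, (D1 i - Dbar1) ^ 2)
    (hSD0 : SD0 = (1 / ((N : ℝ) - 1)) * ∑ i, (D0 i - Dbar0) ^ 2)
    (hSD01 : SD01 = (1 / ((N : ℝ) - 1)) * ∑ i, (D1 i - D0 i - Dbar1 + Dbar0) ^ 2) :
    SD1 / n1 + SD0 / n0 - SD01 / N
      = (1 / ((N : ℝ) - 1)) *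
        (πn * (1 - πn) / p + πa * (1 - πa) / (1 - p) - πc * (1 - πc)) := by

  -- basic numeric facts
  have hNpos : (0:ℕ) < N := by omega
  have hn1N' : n1 < N := by omega
  have hn0pos : 0 < n0 := by omega
  have hNR : (N:ℝ) ≠ 0 := by positivity
  have hN1R : (N:ℝ) - 1 ≠ 0 := by
    have : (2:ℝ) ≤ N := by exact_mod_cast hN
    linarith
  have hn1R : (n1:ℝ) ≠ 0 := by positivity
  have hn0R : (n0:ℝ) ≠ 0 := by positivity
  have hn0cast : (n0:ℝ) = (N:ℝ) - n1 := by
    rw [hn0]; push_cast [Nat.cast_sub (le_of_lt hn1N')]; ring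
  -- pointwise indicator descriptions
  have hind1 : ∀ i, D1 i = if i ∈ C ∪ A then 1 else 0 := by
    intro i
    by_cases h : i ∈ C ∪ A
    · rcases Finset.mem_union.1 h with h | h
      · simp [(hC i).1 h |>.1, h]
      · simp [(hA i).1 h |>.1, h]
    · simp only [if_neg h]
      rcases hD1 i with h1 | h1
      · exact h1
      · exfalso
        rcases hD0 i with h0 | h0
        · exact h (Finset.mem_union.2 (Or.inl ((hC i).2 ⟨h1, h0⟩)))
        · exact h (Finset.mem_union.2 (Or.inr ((hA i).2 ⟨h1, h0⟩)))
  have hind0 : ∀ i, D0 i = if i ∈ A then 1 else 0 := by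
    intro i
    by_cases h : i ∈ A
    · simp [(hA i).1 h |>.2, h]
    · simp only [if_neg h]
      rcases hD0 i with h0 | h0
      · exact h0
      · exfalso
        have h1 : D1 i = 1 := by
          rcases hD1 i with h1 | h1
          · have := mono i; rw [h0, h1] at this; linarith
          · exact h1
        exact h ((hA i).2 ⟨h1, h0⟩)
  have hindc : ∀ i, D1 i - D0 i = if i ∈ C then 1 else 0 := by
    intro i
    by_cases h : i ∈ C
    · obtain ⟨h1, h0⟩ := (hC i).1 h
      simp [h1, h0, h]
    · simp only [if_neg h]
      rcases hD1 i with h1 | h1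
      · have h0 : D0 i = 0 := by
          rcases hD0 i with h0 | h0
          · exact h0
          · have := mono i; rw [h0, h1] at this; linarith
        rw [h1, h0]; ring
      · rcases hD0 i with h0 | h0
        · exact absurd ((hC i).2 ⟨h1, h0⟩) h
        · rw [h1, h0]; ring
  -- disjointness
  have hdCA : Disjoint C A := by
    rw [Finset.disjoint_left]
    intro i hiC hiA
    have := ((hC i).1 hiC).2
    have := ((hA i).1 hiA).2
    linarith
  -- sums
  have hsum1 : ∑ i, D1 i = (C.card : ℝ) + A.card := by
    simp_rw [hind1]
    rw [Finset.sum_ite_mem, Finset.univ_inter, Finset.sum_const,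
      Finset.card_union_of_disjoint hdCA]
    ring
  have hsum0 : ∑ i, D0 i = (A.card : ℝ) := by
    simp_rw [hind0]
    rw [Finset.sum_ite_mem, Finset.univ_inter, Finset.sum_const]
    simp
  have hsumc : ∑ i, (D1 i - D0 i) = (C.card : ℝ) := by
    simp_rw [hindc]
    rw [Finset.sum_ite_mem, Finset.univ_inter, Finset.sum_const]
    simp
  -- never-taker count
  have hNvcard : (Nv.card : ℝ) = (N:ℝ) - C.card - A.card := by
    have hcover : C ∪ A ∪ Nv = Finset.univ := by
      ext i
      simp only [Finset.mem_union, Finset.mem_univ, iff_true]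
      rcases hD1 i with h1 | h1
      · have h0 : D0 i = 0 := by
          rcases hD0 i with h0 | h0
          · exact h0
          · have := mono i; rw [h0, h1] at this; linarith
        exact Or.inr ((hNv i).2 ⟨h1, h0⟩)
      · rcases hD0 i with h0 | h0
        · exact Or.inl (Or.inl ((hC i).2 ⟨h1, h0⟩))
        · exact Or.inl (Or.inr ((hA i).2 ⟨h1, h0⟩))
    have hdNv : Disjoint (C ∪ A) Nv := by
      rw [Finset.disjoint_left]
      intro i hi hiNv
      have hn1' := ((hNv i).1 hiNv).1
      rcases Finset.mem_union.1 hi with h | h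
      · have := ((hC i).1 h).1; linarith
      · have := ((hA i).1 h).1; linarith
    have : C.card + A.card + Nv.card = N := by
      rw [← Finset.card_union_of_disjoint hdCA, ← Finset.card_union_of_disjoint hdNv,
        hcover, Finset.card_univ, Fintype.card_fin]
    have := congrArg (fun n : ℕ => (n:ℝ)) this
    push_cast at this
    linarith
  -- squared sums
  have hsq : ∀ (f : Fin N → ℝ) (m : ℝ), (∀ i, f i ^ 2 = f i) →
      ∑ i, (f i - m) ^ 2 = (∑ i, f i) - 2 * m * (∑ i, f i) + N * m ^ 2 := by
    intro f m hf
    have : ∀ i, (f i - m) ^ 2 = f i - 2 * m * f i + m ^ 2 := by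
      intro i
      have := hf i
      nlinarith [hf i]
    simp_rw [this]
    rw [Finset.sum_add_distrib, Finset.sum_sub_distrib, ← Finset.mul_sum,
      Finset.sum_const, Finset.card_univ, Fintype.card_fin, nsmul_eq_mul]
  have hsq1 := hsq D1 Dbar1 (fun i => by rcases hD1 i with h | h <;> rw [h] <;> ring)
  have hsq0 := hsq D0 Dbar0 (fun i => by rcases hD0 i with h | h <;> rw [h] <;> ring)
  have hsqc : ∑ i, (D1 i - D0 i - Dbar1 + Dbar0) ^ 2
      = (∑ i, (D1 i - D0 i)) - 2 * (Dbar1 - Dbar0) * (∑ i, (D1 i - D0 i))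
        + N * (Dbar1 - Dbar0) ^ 2 := by
    have := hsq (fun i => D1 i - D0 i) (Dbar1 - Dbar0)
      (fun i => by show (D1 i - D0 i) ^ 2 = D1 i - D0 i
                   rw [hindc i]; by_cases h : i ∈ C <;> simp [h])
    rw [← this]
    congr 1
    ext i
    ring
  -- put everything together
  rw [hSD1, hSD0, hSD01, hsq1, hsq0, hsqc, hsum1, hsum0, hsumc, hπc, hπa, hπn,
    hNvcard, hp, hDbar1, hDbar0, hsum1, hsum0]
  have h1p : 1 - (n1:ℝ)/N = (n0:ℝ)/N := by
    rw [hn0cast]; field_simp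
  rw [h1p]
  field_simp
  ring
end

section
/- (Covariance term A.) Under monotonicity and the exclusion restriction, and assuming n_c ≥ 1, n_a ≥ 1, n_n ≥ 1, the treated-arm cross-product satisfies (1/(N−1)) Σ_{i=1}^N (Y_i(1) − Ȳ(1))(D_i(1) − D̄(1)) = (N/(N−1)) π_n [ π_c (Ȳ_c(1) − Ȳ_n(0)) + π_a (Ȳ_a(1) − Ȳ_n(0)) ]. -/
open Finset

set_option maxHeartbeats 800000

/-- Covariance term A: under monotonicity and the exclusion restriction,
(1/(N−1)) Σ (Y_i(1) − Ȳ(1))(D_i(1) − D̄(1))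
= (N/(N−1)) π_n [ π_c (Ȳ_c(1) − Ȳ_n(0)) + π_a (Ȳ_a(1) − Ȳ_n(0)) ]. -/
theorem stmt_14 (N : ℕ) (hN : 2 ≤ N)
    (Y1 Y0 D1 D0 : Fin N → ℝ)
    (hD1 : ∀ i, D1 i = 0 ∨ D1 i = 1)
    (hD0 : ∀ i, D0 i = 0 ∨ D0 i = 1)
    (mono : ∀ i, D0 i ≤ D1 i)
    (excl : ∀ i, D1 i = D0 i → Y1 i = Y0 i)
    (C A Nv : Finset (Fin N))
    (hC : ∀ i, i ∈ C ↔ (D1 i = 1 ∧ D0 i = 0))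
    (hA : ∀ i, i ∈ A ↔ (D1 i = 1 ∧ D0 i = 1))
    (hNv : ∀ i, i ∈ Nv ↔ (D1 i = 0 ∧ D0 i = 0))
    (hCpos : 1 ≤ C.card) (hApos : 1 ≤ A.card) (hNvpos : 1 ≤ Nv.card)
    (πc πa πn : ℝ)
    (hπc : πc = (C.card : ℝ) / N)
    (hπa : πa = (A.card : ℝ) / N)
    (hπn : πn = (Nv.card : ℝ) / N)
    (Ybar1 Dbar1 : ℝ)
    (hYbar1 : Ybar1 = (∑ i, Y1 i) / N)
    (hDbar1 : Dbar1 = (∑ i, D1 i) / N)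
    (Ybarc1 Ybara1 Ybarn0 : ℝ)
    (hYbarc1 : Ybarc1 = (∑ i ∈ C, Y1 i) / C.card)
    (hYbara1 : Ybara1 = (∑ i ∈ A, Y1 i) / A.card)
    (hYbarn0 : Ybarn0 = (∑ i ∈ Nv, Y0 i) / Nv.card) :
    (1 / ((N : ℝ) - 1)) * ∑ i, (Y1 i - Ybar1) * (D1 i - Dbar1)
      = ((N : ℝ) / ((N : ℝ) - 1)) * πn *
        (πc * (Ybarc1 - Ybarn0) + πa * (Ybara1 - Ybarn0)) := by
  have hdCA : Disjoint C A := by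
    rw [Finset.disjoint_left]
    intro i hc ha
    have h1 := (hC i).1 hc
    have h2 := (hA i).1 ha
    rw [h1.2] at h2
    exact one_ne_zero h2.2.symm
  have hdCAN : Disjoint (C ∪ A) Nv := by
    rw [Finset.disjoint_left]
    intro i hi hn
    have h3 := (hNv i).1 hn
    rcases Finset.mem_union.1 hi with h | h
    · have := (hC i).1 h; rw [this.1] at h3; exact one_ne_zero h3.1
    · have := (hA i).1 h; rw [this.1] at h3; exact one_ne_zero h3.1
  have huniv : C ∪ A ∪ Nv = Finset.univ := by
    ext i
    simp only [Finset.mem_union, Finset.mem_univ, iff_true, hC, hA, hNv]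
    rcases hD1 i with h1 | h1 <;> rcases hD0 i with h0 | h0
    · exact Or.inr ⟨h1, h0⟩
    · exfalso; have := mono i; rw [h0, h1] at this; linarith
    · exact Or.inl (Or.inl ⟨h1, h0⟩)
    · exact Or.inl (Or.inr ⟨h1, h0⟩)
  have hsum : ∀ f : Fin N → ℝ,
      ∑ i, f i = ∑ i ∈ C, f i + ∑ i ∈ A, f i + ∑ i ∈ Nv, f i := by
    intro f
    rw [← huniv, Finset.sum_union hdCAN, Finset.sum_union hdCA]
  -- sums
  set SC := ∑ i ∈ C, Y1 i with hSC
  set SA := ∑ i ∈ A, Y1 i with hSA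
  set SN := ∑ i ∈ Nv, Y0 i with hSN
  have hNvY : ∑ i ∈ Nv, Y1 i = SN := by
    apply Finset.sum_congr rfl
    intro i hi
    have h := (hNv i).1 hi
    exact excl i (by rw [h.1, h.2])
  have hsumY : ∑ i, Y1 i = SC + SA + SN := by
    rw [hsum Y1, hNvY]
  have hsumYD : ∑ i, Y1 i * D1 i = SC + SA := by
    rw [hsum (fun i => Y1 i * D1 i)]
    have e1 : ∑ i ∈ C, Y1 i * D1 i = SC :=
      Finset.sum_congr rfl (fun i hi => by rw [((hC i).1 hi).1, mul_one])
    have e2 : ∑ i ∈ A, Y1 i * D1 i = SA :=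
      Finset.sum_congr rfl (fun i hi => by rw [((hA i).1 hi).1, mul_one])
    have e3 : ∑ i ∈ Nv, Y1 i * D1 i = 0 :=
      Finset.sum_eq_zero (fun i hi => by rw [((hNv i).1 hi).1, mul_zero])
    rw [e1, e2, e3, add_zero]
  have hsumD : ∑ i, D1 i = (C.card : ℝ) + A.card := by
    rw [hsum D1]
    have e1 : ∑ i ∈ C, D1 i = (C.card : ℝ) := by
      rw [Finset.sum_congr rfl (fun i hi => ((hC i).1 hi).1)]; simp
    have e2 : ∑ i ∈ A, D1 i = (A.card : ℝ) := by
      rw [Finset.sum_congr rfl (fun i hi => ((hA i).1 hi).1)]; simp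
    have e3 : ∑ i ∈ Nv, D1 i = 0 :=
      Finset.sum_eq_zero (fun i hi => ((hNv i).1 hi).1)
    rw [e1, e2, e3, add_zero]
  have hcard : (C.card : ℝ) + A.card + Nv.card = N := by
    have : C.card + A.card + Nv.card = N := by
      rw [← Finset.card_union_of_disjoint hdCA, ← Finset.card_union_of_disjoint hdCAN,
        huniv, Finset.card_univ, Fintype.card_fin]
    exact_mod_cast this
  have hexp : ∑ i, (Y1 i - Ybar1) * (D1 i - Dbar1)
      = (∑ i, Y1 i * D1 i) - Ybar1 * (∑ i, D1 i) - Dbar1 * (∑ i, Y1 i)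
          + N * (Ybar1 * Dbar1) := by
    have e : ∀ i : Fin N, (Y1 i - Ybar1) * (D1 i - Dbar1)
        = Y1 i * D1 i - Ybar1 * D1 i - Dbar1 * Y1 i + Ybar1 * Dbar1 :=
      fun i => by ring
    rw [Finset.sum_congr rfl fun i _ => e i]
    rw [Finset.sum_add_distrib, Finset.sum_sub_distrib, Finset.sum_sub_distrib,
      ← Finset.mul_sum, ← Finset.mul_sum, Finset.sum_const, Finset.card_univ,
      Fintype.card_fin, nsmul_eq_mul]
  have hN0 : (N : ℝ) ≠ 0 := by positivity
  have hN1 : (N : ℝ) - 1 ≠ 0 := by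
    have : (2 : ℝ) ≤ N := by exact_mod_cast hN
    linarith
  have hc0 : (C.card : ℝ) ≠ 0 := by positivity
  have ha0 : (A.card : ℝ) ≠ 0 := by positivity
  have hn0 : (Nv.card : ℝ) ≠ 0 := by positivity
  have hcan1 : (C.card : ℝ) + A.card + Nv.card - 1 ≠ 0 := by
    rw [hcard]; exact hN1
  have hcan0 : (C.card : ℝ) + A.card + Nv.card ≠ 0 := by
    rw [hcard]; exact hN0
  rw [hexp, hsumY, hsumYD, hsumD, hYbar1, hDbar1, hπc, hπa, hπn, hYbarc1,
    hYbara1, hYbarn0, hsumY, hsumD, ← hcard]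
  field_simp
  ring
end

section
/- (Covariance term B.) Under monotonicity and the exclusion restriction, and assuming n_c ≥ 1, n_a ≥ 1, n_n ≥ 1, the control-arm cross-product satisfies (1/(N−1)) Σ_{i=1}^N (Y_i(0) − Ȳ(0))(D_i(0) − D̄(0)) = (N/(N−1)) π_a [ π_c (Ȳ_a(1) − Ȳ_c(0)) + π_n (Ȳ_a(1) − Ȳ_n(0)) ]. -/
open Finset

set_option maxHeartbeats 1000000 in
/-- Covariance term B: under monotonicity and the exclusion restriction,
(1/(N−1)) Σ (Y_i(0) − Ȳ(0))(D_i(0) − D̄(0))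
= (N/(N−1)) π_a [ π_c (Ȳ_a(1) − Ȳ_c(0)) + π_n (Ȳ_a(1) − Ȳ_n(0)) ]. -/
theorem stmt_15 (N : ℕ) (hN : 2 ≤ N)
    (Y1 Y0 D1 D0 : Fin N → ℝ)
    (hD1 : ∀ i, D1 i = 0 ∨ D1 i = 1)
    (hD0 : ∀ i, D0 i = 0 ∨ D0 i = 1)
    (mono : ∀ i, D0 i ≤ D1 i)
    (excl : ∀ i, D1 i = D0 i → Y1 i = Y0 i)
    (C A Nv : Finset (Fin N))
    (hC : ∀ i, i ∈ C ↔ (D1 i = 1 ∧ D0 i = 0))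
    (hA : ∀ i, i ∈ A ↔ (D1 i = 1 ∧ D0 i = 1))
    (hNv : ∀ i, i ∈ Nv ↔ (D1 i = 0 ∧ D0 i = 0))
    (hCpos : 1 ≤ C.card) (hApos : 1 ≤ A.card) (hNvpos : 1 ≤ Nv.card)
    (πc πa πn : ℝ)
    (hπc : πc = (C.card : ℝ) / N)
    (hπa : πa = (A.card : ℝ) / N)
    (hπn : πn = (Nv.card : ℝ) / N)
    (Ybar0 Dbar0 : ℝ)
    (hYbar0 : Ybar0 = (∑ i, Y0 i) / N)
    (hDbar0 : Dbar0 = (∑ i, D0 i) / N)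
    (Ybarc0 Ybara1 Ybarn0 : ℝ)
    (hYbarc0 : Ybarc0 = (∑ i ∈ C, Y0 i) / C.card)
    (hYbara1 : Ybara1 = (∑ i ∈ A, Y1 i) / A.card)
    (hYbarn0 : Ybarn0 = (∑ i ∈ Nv, Y0 i) / Nv.card) :
    (1 / ((N : ℝ) - 1)) * ∑ i, (Y0 i - Ybar0) * (D0 i - Dbar0)
      = ((N : ℝ) / ((N : ℝ) - 1)) * πa *
        (πc * (Ybara1 - Ybarc0) + πn * (Ybara1 - Ybarn0)) := by
  have hD0A : ∀ i, i ∉ A → D0 i = 0 := by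
    intro i hiA
    rcases hD0 i with h | h
    · exact h
    · exfalso; apply hiA; rw [hA i]
      refine ⟨?_, h⟩
      rcases hD1 i with h1 | h1
      · have := mono i; rw [h, h1] at this; linarith
      · exact h1
  have h1 : ∑ i, Y0 i * D0 i = ∑ i ∈ A, Y1 i := by
    rw [← Finset.sum_subset (Finset.subset_univ A)
      (fun i _ hi => by rw [hD0A i hi, mul_zero])]
    refine Finset.sum_congr rfl fun i hi => ?_
    obtain ⟨hd1, hd0⟩ := (hA i).1 hi
    rw [hd0, excl i (hd1.trans hd0.symm)]; ring
  have h2 : ∑ i, D0 i = (A.card : ℝ) := by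
    rw [← Finset.sum_subset (Finset.subset_univ A) (fun i _ hi => hD0A i hi)]
    rw [Finset.sum_congr rfl (fun i hi => ((hA i).1 hi).2)]
    simp
  have hdCA : Disjoint C A := by
    rw [Finset.disjoint_left]; intro i hiC hiA
    have := ((hC i).1 hiC).2; have := ((hA i).1 hiA).2
    simp_all
  have hdCAN : Disjoint (C ∪ A) Nv := by
    rw [Finset.disjoint_left]; intro i hi hiN
    have hn := (hNv i).1 hiN
    rcases Finset.mem_union.1 hi with h | h
    · have := ((hC i).1 h).1; simp_all
    · have := ((hA i).1 h).1; simp_all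
  have hunion : C ∪ A ∪ Nv = Finset.univ := by
    ext i
    simp only [Finset.mem_union, hC i, hA i, hNv i, Finset.mem_univ, iff_true]
    rcases hD1 i with h1 | h1 <;> rcases hD0 i with h0 | h0
    · tauto
    · have := mono i; rw [h1, h0] at this; linarith
    · tauto
    · tauto
  have h3 : ∑ i, Y0 i = (∑ i ∈ C, Y0 i) + (∑ i ∈ A, Y1 i) + (∑ i ∈ Nv, Y0 i) := by
    rw [← hunion, Finset.sum_union hdCAN, Finset.sum_union hdCA]
    have : ∑ i ∈ A, Y0 i = ∑ i ∈ A, Y1 i := by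
      refine Finset.sum_congr rfl fun i hi => ?_
      obtain ⟨hd1, hd0⟩ := (hA i).1 hi
      exact (excl i (hd1.trans hd0.symm)).symm
    rw [this]
  have hcard : (C.card : ℝ) + A.card + Nv.card = N := by
    have : (C ∪ A ∪ Nv).card = C.card + A.card + Nv.card := by
      rw [Finset.card_union_of_disjoint hdCAN, Finset.card_union_of_disjoint hdCA]
    rw [hunion, Finset.card_univ, Fintype.card_fin] at this
    exact_mod_cast this.symm
  have hnc : (C.card : ℝ) ≠ 0 := by positivity
  have hna : (A.card : ℝ) ≠ 0 := by
    have : 0 < A.card := hApos; positivity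
  have hnn : (Nv.card : ℝ) ≠ 0 := by
    have : 0 < Nv.card := hNvpos; positivity
  have hNne : (N : ℝ) ≠ 0 := by
    have : 0 < N := by omega
    positivity
  have hN1 : (N : ℝ) - 1 ≠ 0 := by
    have : (2 : ℝ) ≤ N := by exact_mod_cast hN
    intro h; linarith
  have hexp : ∑ i, (Y0 i - Ybar0) * (D0 i - Dbar0)
      = (∑ i, Y0 i * D0 i) - Ybar0 * (∑ i, D0 i) - Dbar0 * (∑ i, Y0 i)
        + N * (Ybar0 * Dbar0) := by
    have hpt : ∀ i : Fin N, (Y0 i - Ybar0) * (D0 i - Dbar0)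
        = Y0 i * D0 i - Ybar0 * D0 i - Dbar0 * Y0 i + Ybar0 * Dbar0 := fun i => by ring
    simp only [hpt, Finset.sum_add_distrib, Finset.sum_sub_distrib, ← Finset.mul_sum,
      Finset.sum_const, Finset.card_univ, Fintype.card_fin, nsmul_eq_mul]
    ring
  have hNne' : (C.card : ℝ) + A.card + Nv.card ≠ 0 := by rw [hcard]; exact hNne
  have hN1' : (C.card : ℝ) + A.card + Nv.card - 1 ≠ 0 := by rw [hcard]; exact hN1
  rw [hexp, h1, h2, h3, hYbar0, hDbar0, h2, h3, hπa, hπc, hπn, hYbarc0, hYbara1, hYbarn0,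
    ← hcard]
  field_simp
  ring
end

section
/- (Covariance term C.) Under monotonicity and the exclusion restriction, and assuming n_c ≥ 1, the cross-product of individual treatment effects with individual compliance satisfies (1/(N−1)) Σ_{i=1}^N (Y_i(1) − Y_i(0) − ITT)(D_i(1) − D_i(0) − π_c) = (N/(N−1)) π_c (1 − π_c) τ, where ITT = Ȳ(1) − Ȳ(0) and τ = Ȳ_c(1) − Ȳ_c(0). -/
open Finset

/-- Covariance term C: under monotonicity and the exclusion restriction,
(1/(N−1)) Σ (Y_i(1) − Y_i(0) − ITT)(D_i(1) − D_i(0) − π_c)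
= (N/(N−1)) π_c (1 − π_c) τ. -/
theorem stmt_16 (N : ℕ) (hN : 2 ≤ N)
    (Y1 Y0 D1 D0 : Fin N → ℝ)
    (hD1 : ∀ i, D1 i = 0 ∨ D1 i = 1)
    (hD0 : ∀ i, D0 i = 0 ∨ D0 i = 1)
    (mono : ∀ i, D0 i ≤ D1 i)
    (excl : ∀ i, D1 i = D0 i → Y1 i = Y0 i)
    (C : Finset (Fin N))
    (hC : ∀ i, i ∈ C ↔ (D1 i = 1 ∧ D0 i = 0))
    (hCpos : 1 ≤ C.card)
    (πc : ℝ) (hπc : πc = (C.card : ℝ) / N)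
    (Ybar1 Ybar0 : ℝ)
    (hYbar1 : Ybar1 = (∑ i, Y1 i) / N)
    (hYbar0 : Ybar0 = (∑ i, Y0 i) / N)
    (ITT : ℝ) (hITT : ITT = Ybar1 - Ybar0)
    (Ybarc1 Ybarc0 τ : ℝ)
    (hYbarc1 : Ybarc1 = (∑ i ∈ C, Y1 i) / C.card)
    (hYbarc0 : Ybarc0 = (∑ i ∈ C, Y0 i) / C.card)
    (hτ : τ = Ybarc1 - Ybarc0) :
    (1 / ((N : ℝ) - 1)) * ∑ i, (Y1 i - Y0 i - ITT) * (D1 i - D0 i - πc)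
      = ((N : ℝ) / ((N : ℝ) - 1)) * πc * (1 - πc) * τ := by
  have hN0 : (N : ℝ) ≠ 0 := by positivity
  have hc0 : (C.card : ℝ) ≠ 0 := by
    have : 0 < C.card := hCpos
    positivity
  -- outside C, D1 = D0 and Y1 = Y0
  have hout : ∀ i ∈ Cᶜ, D1 i = D0 i ∧ Y1 i = Y0 i := by
    intro i hi
    have hni : ¬ (D1 i = 1 ∧ D0 i = 0) := by
      rw [← hC]; exact (Finset.mem_compl.mp hi)
    have hd : D1 i = D0 i := by
      rcases hD1 i with h1 | h1 <;> rcases hD0 i with h0 | h0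
      · rw [h1, h0]
      · exfalso; have := mono i; rw [h1, h0] at this; linarith
      · exact absurd ⟨h1, h0⟩ hni
      · rw [h1, h0]
    exact ⟨hd, excl i hd⟩
  -- sum of treatment effects over C
  have hSumC : ∑ i ∈ C, (Y1 i - Y0 i) = (C.card : ℝ) * τ := by
    rw [Finset.sum_sub_distrib, hτ, hYbarc1, hYbarc0]
    field_simp
  -- total sum of treatment effects
  have hSplit : ∀ f : Fin N → ℝ, ∑ i, f i = ∑ i ∈ C, f i + ∑ i ∈ Cᶜ, f i := by
    intro f; exact (Finset.sum_add_sum_compl C f).symm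
  have hTot : ∑ i, (Y1 i - Y0 i) = (C.card : ℝ) * τ := by
    rw [hSplit, hSumC, Finset.sum_eq_zero, add_zero]
    intro i hi
    rw [(hout i hi).2]; ring
  -- ITT = πc * τ
  have hITT2 : ITT = πc * τ := by
    rw [hITT, hYbar1, hYbar0, hπc]
    have : (∑ i, Y1 i) - (∑ i, Y0 i) = (C.card : ℝ) * τ := by
      rw [← Finset.sum_sub_distrib]; exact hTot
    field_simp
    linarith [this]
  -- compute the main sum
  have hcardc : ((Cᶜ : Finset (Fin N)).card : ℝ) = (N : ℝ) - C.card := by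
    have hle : C.card ≤ N := le_trans (Finset.card_le_card (Finset.subset_univ C)) (by simp)
    rw [Finset.card_compl, Fintype.card_fin, Nat.cast_sub hle]
  have hMain : ∑ i, (Y1 i - Y0 i - ITT) * (D1 i - D0 i - πc)
      = (1 - πc) * ((C.card : ℝ) * τ - (C.card : ℝ) * ITT)
        + ((N : ℝ) - C.card) * (ITT * πc) := by
    rw [hSplit]
    congr 1
    · have : ∀ i ∈ C, (Y1 i - Y0 i - ITT) * (D1 i - D0 i - πc)
          = (Y1 i - Y0 i - ITT) * (1 - πc) := by
        intro i hi
        obtain ⟨h1, h0⟩ := (hC i).mp hi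
        rw [h1, h0]; ring
      rw [Finset.sum_congr rfl this, ← Finset.sum_mul, Finset.sum_sub_distrib,
        hSumC, Finset.sum_const, nsmul_eq_mul]
      ring
    · have : ∀ i ∈ Cᶜ, (Y1 i - Y0 i - ITT) * (D1 i - D0 i - πc) = ITT * πc := by
        intro i hi
        obtain ⟨hd, hy⟩ := hout i hi
        rw [hd, hy]; ring
      rw [Finset.sum_congr rfl this, Finset.sum_const, nsmul_eq_mul, hcardc]
  rw [hMain, hITT2]
  have hcard : (C.card : ℝ) = (N : ℝ) * πc := by
    rw [hπc]; field_simp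
  rw [hcard]
  ring
end

section
/- (Covariance of ITT̂ and f̂.) Under monotonicity and the exclusion restriction, with n_c ≥ 1, n_a ≥ 1, n_n ≥ 1 and p = n_1/N for 1 ≤ n_1 ≤ N−1, the Neyman covariance expression Cov := (1/(Np(N−1))) Σ_i (Y_i(1) − Ȳ(1))(D_i(1) − D̄(1)) + (1/(N(1−p)(N−1))) Σ_i (Y_i(0) − Ȳ(0))(D_i(0) − D̄(0)) − (1/(N(N−1))) Σ_i (Y_i(1) − Y_i(0) − ITT)(D_i(1) − D_i(0) − π_c) satisfies Cov = [π_n π_c/(p(N−1))](Ȳ_c(1) − Ȳ_n(0)) + [π_n π_a/(p(1−p)(N−1))](Ȳ_a(1) − Ȳ_n(0)) + [π_a π_c/((1−p)(N−1))](Ȳ_a(1) − Ȳ_c(0)) − [π_c(1−π_c)/(N−1)] τ. -/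
open Finset

set_option maxHeartbeats 2000000 in
/-- Covariance of ITT̂ and f̂: under monotonicity and the exclusion restriction,
the Neyman covariance expression equals
[π_n π_c/(p(N−1))](Ȳ_c(1) − Ȳ_n(0)) + [π_n π_a/(p(1−p)(N−1))](Ȳ_a(1) − Ȳ_n(0))
+ [π_a π_c/((1−p)(N−1))](Ȳ_a(1) − Ȳ_c(0)) − [π_c(1−π_c)/(N−1)] τ. -/
theorem stmt_17 (N n1 : ℕ) (hN : 2 ≤ N) (hn1 : 1 ≤ n1) (hn1N : n1 ≤ N - 1)
    (Y1 Y0 D1 D0 : Fin N → ℝ)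
    (hD1 : ∀ i, D1 i = 0 ∨ D1 i = 1)
    (hD0 : ∀ i, D0 i = 0 ∨ D0 i = 1)
    (mono : ∀ i, D0 i ≤ D1 i)
    (excl : ∀ i, D1 i = D0 i → Y1 i = Y0 i)
    (C A Nv : Finset (Fin N))
    (hC : ∀ i, i ∈ C ↔ (D1 i = 1 ∧ D0 i = 0))
    (hA : ∀ i, i ∈ A ↔ (D1 i = 1 ∧ D0 i = 1))
    (hNv : ∀ i, i ∈ Nv ↔ (D1 i = 0 ∧ D0 i = 0))
    (hCpos : 1 ≤ C.card) (hApos : 1 ≤ A.card) (hNvpos : 1 ≤ Nv.card)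
    (πc πa πn : ℝ)
    (hπc : πc = (C.card : ℝ) / N)
    (hπa : πa = (A.card : ℝ) / N)
    (hπn : πn = (Nv.card : ℝ) / N)
    (p : ℝ) (hp : p = (n1 : ℝ) / N)
    (Ybar1 Ybar0 Dbar1 Dbar0 : ℝ)
    (hYbar1 : Ybar1 = (∑ i, Y1 i) / N)
    (hYbar0 : Ybar0 = (∑ i, Y0 i) / N)
    (hDbar1 : Dbar1 = (∑ i, D1 i) / N)
    (hDbar0 : Dbar0 = (∑ i, D0 i) / N)
    (ITT : ℝ) (hITT : ITT = Ybar1 - Ybar0)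
    (Ybarc1 Ybarc0 Ybara1 Ybarn0 τ : ℝ)
    (hYbarc1 : Ybarc1 = (∑ i ∈ C, Y1 i) / C.card)
    (hYbarc0 : Ybarc0 = (∑ i ∈ C, Y0 i) / C.card)
    (hYbara1 : Ybara1 = (∑ i ∈ A, Y1 i) / A.card)
    (hYbarn0 : Ybarn0 = (∑ i ∈ Nv, Y0 i) / Nv.card)
    (hτ : τ = Ybarc1 - Ybarc0)
    (Cov : ℝ)
    (hCov : Cov =
      (1 / ((N : ℝ) * p * ((N : ℝ) - 1))) *
        (∑ i, (Y1 i - Ybar1) * (D1 i - Dbar1))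
      + (1 / ((N : ℝ) * (1 - p) * ((N : ℝ) - 1))) *
        (∑ i, (Y0 i - Ybar0) * (D0 i - Dbar0))
      - (1 / ((N : ℝ) * ((N : ℝ) - 1))) *
        (∑ i, (Y1 i - Y0 i - ITT) * (D1 i - D0 i - πc))) :
    Cov = (πn * πc / (p * ((N : ℝ) - 1))) * (Ybarc1 - Ybarn0)
      + (πn * πa / (p * (1 - p) * ((N : ℝ) - 1))) * (Ybara1 - Ybarn0)
      + (πa * πc / ((1 - p) * ((N : ℝ) - 1))) * (Ybara1 - Ybarc0)
      - (πc * (1 - πc) / ((N : ℝ) - 1)) * τ := by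
  -- partition facts
  have hdCA : Disjoint C A := by
    rw [Finset.disjoint_left]; intro i hiC hiA
    have h1 := (hC i).1 hiC; have h2 := (hA i).1 hiA
    rw [h1.2] at h2; exact absurd h2.2 zero_ne_one
  have hdCN : Disjoint C Nv := by
    rw [Finset.disjoint_left]; intro i hiC hiN
    have h1 := (hC i).1 hiC; have h2 := (hNv i).1 hiN
    rw [h1.1] at h2; exact absurd h2.1 one_ne_zero
  have hdAN : Disjoint A Nv := by
    rw [Finset.disjoint_left]; intro i hiA hiN
    have h1 := (hA i).1 hiA; have h2 := (hNv i).1 hiN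
    rw [h1.1] at h2; exact absurd h2.1 one_ne_zero
  have hdCAN : Disjoint (C ∪ A) Nv := Finset.disjoint_union_left.2 ⟨hdCN, hdAN⟩
  have hunion : C ∪ A ∪ Nv = Finset.univ := by
    ext i
    simp only [Finset.mem_union, Finset.mem_univ, iff_true, hC, hA, hNv]
    rcases hD1 i with h1 | h1
    · right; refine ⟨h1, ?_⟩
      rcases hD0 i with h0 | h0
      · exact h0
      · exfalso; have := mono i; rw [h1, h0] at this; linarith
    · rcases hD0 i with h0 | h0
      · exact Or.inl (Or.inl ⟨h1, h0⟩)
      · exact Or.inl (Or.inr ⟨h1, h0⟩)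
  have hsum : ∀ f : Fin N → ℝ, ∑ i, f i = ∑ i ∈ C, f i + ∑ i ∈ A, f i + ∑ i ∈ Nv, f i := by
    intro f
    rw [← hunion, Finset.sum_union hdCAN, Finset.sum_union hdCA]
  have hcard : (C.card : ℝ) + A.card + Nv.card = N := by
    have : (C ∪ A ∪ Nv).card = N := by rw [hunion, Finset.card_univ, Fintype.card_fin]
    rw [Finset.card_union_of_disjoint hdCAN, Finset.card_union_of_disjoint hdCA] at this
    push_cast [← this]; ring
  set SC1 := ∑ i ∈ C, Y1 i with hSC1
  set SC0 := ∑ i ∈ C, Y0 i with hSC0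
  set SA := ∑ i ∈ A, Y1 i with hSA
  set SN := ∑ i ∈ Nv, Y0 i with hSN
  have hA0 : ∑ i ∈ A, Y0 i = SA := by
    apply Finset.sum_congr rfl; intro i hi
    have h := (hA i).1 hi
    exact (excl i (by rw [h.1, h.2])).symm
  have hN1 : ∑ i ∈ Nv, Y1 i = SN := by
    apply Finset.sum_congr rfl; intro i hi
    have h := (hNv i).1 hi
    exact excl i (by rw [h.1, h.2])
  -- pointwise values
  have e1 : ∑ i, Y1 i * D1 i = SC1 + SA := by
    rw [hsum fun i => Y1 i * D1 i]
    have r1 : ∑ i ∈ C, Y1 i * D1 i = SC1 :=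
      Finset.sum_congr rfl fun i hi => by rw [((hC i).1 hi).1, mul_one]
    have r2 : ∑ i ∈ A, Y1 i * D1 i = SA :=
      Finset.sum_congr rfl fun i hi => by rw [((hA i).1 hi).1, mul_one]
    have r3 : ∑ i ∈ Nv, Y1 i * D1 i = 0 :=
      Finset.sum_eq_zero fun i hi => by rw [((hNv i).1 hi).1, mul_zero]
    rw [r1, r2, r3]; ring
  have e2 : ∑ i, Y0 i * D0 i = SA := by
    rw [hsum fun i => Y0 i * D0 i]
    have r1 : ∑ i ∈ C, Y0 i * D0 i = 0 :=
      Finset.sum_eq_zero fun i hi => by rw [((hC i).1 hi).2, mul_zero]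
    have r2 : ∑ i ∈ A, Y0 i * D0 i = SA := by
      rw [← hA0]; exact Finset.sum_congr rfl fun i hi => by rw [((hA i).1 hi).2, mul_one]
    have r3 : ∑ i ∈ Nv, Y0 i * D0 i = 0 :=
      Finset.sum_eq_zero fun i hi => by rw [((hNv i).1 hi).2, mul_zero]
    rw [r1, r2, r3]; ring
  have e3 : ∑ i, Y1 i = SC1 + SA + SN := by rw [hsum Y1, hN1]
  have e4 : ∑ i, Y0 i = SC0 + SA + SN := by rw [hsum Y0, hA0]
  have e5 : ∑ i, D1 i = (C.card : ℝ) + A.card := by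
    rw [hsum D1]
    have r1 : ∑ i ∈ C, D1 i = (C.card : ℝ) := by
      rw [Finset.sum_congr rfl fun i hi => ((hC i).1 hi).1]; simp
    have r2 : ∑ i ∈ A, D1 i = (A.card : ℝ) := by
      rw [Finset.sum_congr rfl fun i hi => ((hA i).1 hi).1]; simp
    have r3 : ∑ i ∈ Nv, D1 i = 0 :=
      Finset.sum_eq_zero fun i hi => ((hNv i).1 hi).1
    rw [r1, r2, r3]; ring
  have e6 : ∑ i, D0 i = (A.card : ℝ) := by
    rw [hsum D0]
    have r1 : ∑ i ∈ C, D0 i = 0 := Finset.sum_eq_zero fun i hi => ((hC i).1 hi).2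
    have r2 : ∑ i ∈ A, D0 i = (A.card : ℝ) := by
      rw [Finset.sum_congr rfl fun i hi => ((hA i).1 hi).2]; simp
    have r3 : ∑ i ∈ Nv, D0 i = 0 := Finset.sum_eq_zero fun i hi => ((hNv i).1 hi).2
    rw [r1, r2, r3]; ring
  have e7 : ∑ i, (Y1 i - Y0 i) * (D1 i - D0 i) = SC1 - SC0 := by
    rw [hsum fun i => (Y1 i - Y0 i) * (D1 i - D0 i)]
    have r1 : ∑ i ∈ C, (Y1 i - Y0 i) * (D1 i - D0 i) = SC1 - SC0 := by
      rw [← Finset.sum_sub_distrib]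
      exact Finset.sum_congr rfl fun i hi => by
        have h := (hC i).1 hi; rw [h.1, h.2]; ring
    have r2 : ∑ i ∈ A, (Y1 i - Y0 i) * (D1 i - D0 i) = 0 :=
      Finset.sum_eq_zero fun i hi => by
        have h := (hA i).1 hi; rw [h.1, h.2]; ring
    have r3 : ∑ i ∈ Nv, (Y1 i - Y0 i) * (D1 i - D0 i) = 0 :=
      Finset.sum_eq_zero fun i hi => by
        have h := (hNv i).1 hi; rw [h.1, h.2]; ring
    rw [r1, r2, r3]; ring
  -- expand the three covariance-style sums
  have T1 : ∑ i, (Y1 i - Ybar1) * (D1 i - Dbar1)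
      = (∑ i, Y1 i * D1 i) - Ybar1 * (∑ i, D1 i) - Dbar1 * (∑ i, Y1 i)
        + (N : ℝ) * (Ybar1 * Dbar1) := by
    have : ∀ i : Fin N, (Y1 i - Ybar1) * (D1 i - Dbar1)
        = Y1 i * D1 i - Ybar1 * D1 i - Dbar1 * Y1 i + Ybar1 * Dbar1 := fun i => by ring
    rw [Finset.sum_congr rfl fun i _ => this i]
    simp [Finset.sum_add_distrib, Finset.sum_sub_distrib, ← Finset.mul_sum,
      Finset.card_univ]
  have T0 : ∑ i, (Y0 i - Ybar0) * (D0 i - Dbar0)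
      = (∑ i, Y0 i * D0 i) - Ybar0 * (∑ i, D0 i) - Dbar0 * (∑ i, Y0 i)
        + (N : ℝ) * (Ybar0 * Dbar0) := by
    have : ∀ i : Fin N, (Y0 i - Ybar0) * (D0 i - Dbar0)
        = Y0 i * D0 i - Ybar0 * D0 i - Dbar0 * Y0 i + Ybar0 * Dbar0 := fun i => by ring
    rw [Finset.sum_congr rfl fun i _ => this i]
    simp [Finset.sum_add_distrib, Finset.sum_sub_distrib, ← Finset.mul_sum,
      Finset.card_univ]
  have T2 : ∑ i, (Y1 i - Y0 i - ITT) * (D1 i - D0 i - πc)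
      = (∑ i, (Y1 i - Y0 i) * (D1 i - D0 i))
        - πc * ((∑ i, Y1 i) - (∑ i, Y0 i))
        - ITT * ((∑ i, D1 i) - (∑ i, D0 i))
        + (N : ℝ) * (ITT * πc) := by
    have : ∀ i : Fin N, (Y1 i - Y0 i - ITT) * (D1 i - D0 i - πc)
        = (Y1 i - Y0 i) * (D1 i - D0 i) - πc * (Y1 i - Y0 i)
          - ITT * (D1 i - D0 i) + ITT * πc := fun i => by ring
    rw [Finset.sum_congr rfl fun i _ => this i]
    simp [Finset.sum_add_distrib, Finset.sum_sub_distrib, ← Finset.mul_sum,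
      Finset.card_univ, mul_sub]
  -- numeric positivity / nonzeroness
  have hN0 : (0 : ℝ) < N := by positivity
  have hNne : (N : ℝ) ≠ 0 := ne_of_gt hN0
  have hN1R : (1 : ℝ) ≤ (N : ℝ) - 1 := by
    have : (2 : ℝ) ≤ N := by exact_mod_cast hN
    linarith
  have hNm1 : ((N : ℝ) - 1) ≠ 0 := by linarith
  have hpp : 0 < p := by
    rw [hp]; apply div_pos _ hN0; exact_mod_cast hn1
  have hpne : p ≠ 0 := ne_of_gt hpp
  have h1p : 0 < 1 - p := by
    rw [hp]
    have hlt : (n1 : ℝ) < N := by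
      have : n1 < N := lt_of_le_of_lt hn1N (Nat.sub_lt (by omega) one_pos)
      exact_mod_cast this
    rw [sub_pos, div_lt_one hN0]; exact hlt
  have h1pne : (1 : ℝ) - p ≠ 0 := ne_of_gt h1p
  have hnc : (C.card : ℝ) ≠ 0 := by
    have : (0:ℝ) < C.card := by exact_mod_cast hCpos
    exact ne_of_gt this
  have hna : (A.card : ℝ) ≠ 0 := by
    have : (0:ℝ) < A.card := by exact_mod_cast hApos
    exact ne_of_gt this
  have hnn : (Nv.card : ℝ) ≠ 0 := by
    have : (0:ℝ) < Nv.card := by exact_mod_cast hNvpos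
    exact ne_of_gt this
  have hnnval : (Nv.card : ℝ) = (N : ℝ) - C.card - A.card := by linarith
  have hnn' : ((N : ℝ) - C.card - A.card) ≠ 0 := by rw [← hnnval]; exact hnn
  subst hπc hπa hπn hYbar1 hYbar0 hDbar1 hDbar0 hITT hYbarc1 hYbarc0 hYbara1 hYbarn0 hτ hCov
  rw [T1, T0, T2, e1, e2, e3, e4, e5, e6, e7, hnnval]
  field_simp
  ring
end

section
/- (Exact bias of the IV estimator under one-sided noncompliance.) Assume one-sided noncompliance (D_i(0) = 0 for all i), the exclusion restriction, n_c ≥ 1 compliers and n_n = N − n_c ≥ 1 never-takers, and n_c > n_0 so that every size-n_1 treated subset contains at least one complier (hence f̂ > 0 on every assignment). Then, with expectations over the uniform choice of the size-n_1 treated subset, E[ITT̂/f̂] − τ = (1/(1−p)) (1 − E[1/f̂]·E[f̂]) (Ȳ_c(0) − Ȳ_n), where τ = Ȳ_c(1) − Ȳ_c(0), p = n_1/N, and Ȳ_n is the common average outcome of the never-takers. -/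
open Finset

lemma image_swap_eq {α : Type*} [DecidableEq α] {C : Finset α} {i j : α}
    (h : i ∈ C ↔ j ∈ C) : C.image (Equiv.swap i j) = C := by
  have hmem : ∀ x ∈ C, Equiv.swap i j x ∈ C := by
    intro x hx
    rcases eq_or_ne x i with rfl | hxi
    · rw [Equiv.swap_apply_left]; exact h.mp hx
    rcases eq_or_ne x j with rfl | hxj
    · rw [Equiv.swap_apply_right]; exact h.mpr hx
    · rwa [Equiv.swap_apply_of_ne_of_ne hxi hxj]
  apply Finset.Subset.antisymm
  · intro x hx
    obtain ⟨y, hy, rfl⟩ := Finset.mem_image.1 hx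
    exact hmem y hy
  · intro x hx
    exact Finset.mem_image.2 ⟨Equiv.swap i j x, hmem x hx, Equiv.swap_apply_self _ _ _⟩

lemma Wconst {N : ℕ} (n1 : ℕ) (w : Finset (Fin N) → ℝ) (a b : Fin N)
    (hw : ∀ T : Finset (Fin N), w (T.image (Equiv.swap a b)) = w T) :
    ∑ T ∈ (powersetCard n1 (univ : Finset (Fin N))).filter (fun T => a ∈ T), w T
      = ∑ T ∈ (powersetCard n1 (univ : Finset (Fin N))).filter (fun T => b ∈ T), w T := by
  have hinv : ∀ T : Finset (Fin N), (T.image (Equiv.swap a b)).image (Equiv.swap a b) = T := by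
    intro T
    rw [Finset.image_image]
    ext x
    simp [Equiv.swap_apply_self]
  apply Finset.sum_nbij' (i := fun T => T.image (Equiv.swap a b))
    (j := fun T => T.image (Equiv.swap a b))
  · intro T hT
    simp only [Finset.mem_filter, Finset.mem_powersetCard_univ] at hT ⊢
    refine ⟨by rw [Finset.card_image_of_injective _ (Equiv.injective _)]; exact hT.1, ?_⟩
    have := Finset.mem_image_of_mem (Equiv.swap a b) hT.2
    rwa [Equiv.swap_apply_left] at this
  · intro T hT
    simp only [Finset.mem_filter, Finset.mem_powersetCard_univ] at hT ⊢
    refine ⟨by rw [Finset.card_image_of_injective _ (Equiv.injective _)]; exact hT.1, ?_⟩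
    have := Finset.mem_image_of_mem (Equiv.swap a b) hT.2
    rwa [Equiv.swap_apply_right] at this
  · intro T _; exact hinv T
  · intro T _; exact hinv T
  · intro T _; exact (hw T).symm

lemma master {N : ℕ} (n1 : ℕ) (S : Finset (Fin N)) (w : Finset (Fin N) → ℝ)
    (hw : ∀ a ∈ S, ∀ b ∈ S, ∀ T : Finset (Fin N), w (T.image (Equiv.swap a b)) = w T)
    (h : Fin N → ℝ) :
    (S.card : ℝ) * ∑ T ∈ powersetCard n1 (univ : Finset (Fin N)), w T * ∑ x ∈ T ∩ S, h x
      = (∑ x ∈ S, h x) *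
        ∑ T ∈ powersetCard n1 (univ : Finset (Fin N)), w T * ((T ∩ S).card : ℝ) := by
  rcases S.eq_empty_or_nonempty with rfl | ⟨a0, ha0⟩
  · simp
  set 𝒯 := powersetCard n1 (univ : Finset (Fin N)) with h𝒯
  set W : Fin N → ℝ := fun x => ∑ T ∈ 𝒯.filter (fun T => x ∈ T), w T with hW
  have swapsum : ∀ g : Fin N → ℝ,
      ∑ T ∈ 𝒯, w T * ∑ x ∈ T ∩ S, g x = ∑ x ∈ S, g x * W x := by
    intro g
    have h1 : ∀ T : Finset (Fin N), ∑ x ∈ T ∩ S, g x = ∑ x ∈ S, if x ∈ T then g x else 0 := by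
      intro T
      rw [Finset.inter_comm, ← Finset.filter_mem_eq_inter, Finset.sum_filter]
    calc ∑ T ∈ 𝒯, w T * ∑ x ∈ T ∩ S, g x
        = ∑ T ∈ 𝒯, ∑ x ∈ S, (if x ∈ T then w T * g x else 0) := by
          refine Finset.sum_congr rfl fun T _ => ?_
          rw [h1, Finset.mul_sum]
          exact Finset.sum_congr rfl fun x _ => by split <;> simp
      _ = ∑ x ∈ S, ∑ T ∈ 𝒯, (if x ∈ T then w T * g x else 0) := Finset.sum_comm
      _ = ∑ x ∈ S, g x * W x := by
          refine Finset.sum_congr rfl fun x _ => ?_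
          rw [← Finset.sum_filter, ← Finset.sum_mul]
          exact mul_comm _ _
  have Wc : ∀ x ∈ S, W x = W a0 := by
    intro x hx
    exact Wconst n1 w x a0 (hw x hx a0 ha0)
  have e1 : ∑ T ∈ 𝒯, w T * ∑ x ∈ T ∩ S, h x = (∑ x ∈ S, h x) * W a0 := by
    rw [swapsum h]
    calc ∑ x ∈ S, h x * W x = ∑ x ∈ S, h x * W a0 :=
          Finset.sum_congr rfl fun x hx => by rw [Wc x hx]
      _ = (∑ x ∈ S, h x) * W a0 := (Finset.sum_mul _ _ _).symm
  have e2 : ∑ T ∈ 𝒯, w T * ((T ∩ S).card : ℝ) = (S.card : ℝ) * W a0 := by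
    have h2 := swapsum (fun _ => 1)
    have h3 : ∀ T : Finset (Fin N), ∑ _x ∈ T ∩ S, (1:ℝ) = ((T ∩ S).card : ℝ) := by
      intro T; simp
    calc ∑ T ∈ 𝒯, w T * ((T ∩ S).card : ℝ)
        = ∑ T ∈ 𝒯, w T * ∑ _x ∈ T ∩ S, (1:ℝ) :=
          Finset.sum_congr rfl fun T _ => by rw [h3]
      _ = ∑ x ∈ S, (1:ℝ) * W x := h2
      _ = ∑ x ∈ S, (1:ℝ) * W a0 := Finset.sum_congr rfl fun x hx => by rw [Wc x hx]
      _ = (S.card : ℝ) * W a0 := by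
          rw [Finset.sum_const]
          simp [nsmul_eq_mul]
  rw [e1, e2]
  ring

lemma card_inter_image_swap {N : ℕ} {C : Finset (Fin N)} {a b : Fin N}
    (hab : a ∈ C ↔ b ∈ C) (T : Finset (Fin N)) :
    ((T.image (Equiv.swap a b)) ∩ C).card = (T ∩ C).card := by
  have hCim := image_swap_eq hab
  calc ((T.image (Equiv.swap a b)) ∩ C).card
      = ((T.image (Equiv.swap a b)) ∩ (C.image (Equiv.swap a b))).card := by rw [hCim]
    _ = ((T ∩ C).image (Equiv.swap a b)).card := by
        rw [Finset.image_inter _ _ (Equiv.injective _)]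
    _ = (T ∩ C).card := Finset.card_image_of_injective _ (Equiv.injective _)

lemma final_algebra (k a sc1 sc0 sn rc rn rn1 rN : ℝ)
    (hk : k ≠ 0) (hrc : rc ≠ 0) (hrn : rn ≠ 0) (hrn1 : rn1 ≠ 0) (hrN : rN ≠ 0)
    (hd : rN - rn1 ≠ 0) (hrnE : rn = rN - rc) :
    (sc1 * k / rc + sn * (rn1 * a - k) / rn
      - rn1 / (rN - rn1) * sc0 * a + rn1 / (rN - rn1) * (sc0 * k / rc)
      - rn1 / (rN - rn1) * sn * a + rn1 / (rN - rn1) * (sn * (rn1 * a - k) / rn)) / k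
      - (sc1 / rc - sc0 / rc)
    = 1 / (1 - rn1 / rN) * (1 - rn1 * a / k * (rc * rn1 * k / rN / rn1 / k))
        * (sc0 / rc - sn / rn) := by
  subst hrnE
  have h1 : 1 - rn1 / rN ≠ 0 := by
    intro h
    apply hd
    field_simp at h
    linarith
  field_simp
  ring

/-- Exact bias of the IV estimator under one-sided noncompliance:
E[ITT̂/f̂] − τ = (1/(1−p)) (1 − E[1/f̂]·E[f̂]) (Ȳ_c(0) − Ȳ_n), expectations over
the uniform choice of the size-n1 treated subset, assuming n_c > n_0 so that
every size-n1 treated subset contains at least one complier. -/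
theorem stmt_18 (N n1 n0 : ℕ) (hN : 2 ≤ N) (hn1 : 1 ≤ n1) (hn1N : n1 ≤ N - 1)
    (hn0 : n0 = N - n1)
    (Y1 Y0 D1 D0 : Fin N → ℝ)
    (hD1 : ∀ i, D1 i = 0 ∨ D1 i = 1)
    (hD0zero : ∀ i, D0 i = 0)
    (excl : ∀ i, D1 i = D0 i → Y1 i = Y0 i)
    (C Nv : Finset (Fin N))
    (hC : ∀ i, i ∈ C ↔ D1 i = 1)
    (hNv : ∀ i, i ∈ Nv ↔ D1 i = 0)
    (nc nn : ℕ) (hnc : nc = C.card) (hnn : nn = Nv.card)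
    (hncpos : 1 ≤ nc) (hnnpos : 1 ≤ nn)
    (hmany : n0 < nc)
    (p : ℝ) (hp : p = (n1 : ℝ) / N)
    (Ybarc1 Ybarc0 τ Ybarn : ℝ)
    (hYbarc1 : Ybarc1 = (∑ i ∈ C, Y1 i) / nc)
    (hYbarc0 : Ybarc0 = (∑ i ∈ C, Y0 i) / nc)
    (hτ : τ = Ybarc1 - Ybarc0)
    (hYbarn : Ybarn = (∑ i ∈ Nv, Y0 i) / nn)
    (ITThat fhat : Finset (Fin N) → ℝ)
    (hITT : ∀ T : Finset (Fin N),
      ITThat T = (∑ i ∈ T, Y1 i) / n1 - (∑ i ∈ Tᶜ, Y0 i) / n0)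
    (hf : ∀ T : Finset (Fin N),
      fhat T = (∑ i ∈ T, D1 i) / n1 - (∑ i ∈ Tᶜ, D0 i) / n0)
    (𝒯 : Finset (Finset (Fin N)))
    (h𝒯 : 𝒯 = Finset.powersetCard n1 (Finset.univ : Finset (Fin N))) :
    (∑ T ∈ 𝒯, ITThat T / fhat T) / (𝒯.card : ℝ) - τ
      = (1 / (1 - p)) *
        (1 - ((∑ T ∈ 𝒯, 1 / fhat T) / (𝒯.card : ℝ)) *
          ((∑ T ∈ 𝒯, fhat T) / (𝒯.card : ℝ))) *
        (Ybarc0 - Ybarn) := by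
  subst h𝒯 hn0 hnc hnn hp hτ hYbarc1 hYbarc0 hYbarn
  set 𝒯 := Finset.powersetCard n1 (Finset.univ : Finset (Fin N)) with h𝒯def
  -- basic numerics
  have hn1N' : n1 ≤ N := le_trans hn1N (Nat.sub_le N 1)
  have hn1ltN : n1 < N := by omega
  have hNvC : Nv = Cᶜ := by
    ext i
    rw [Finset.mem_compl, hNv, hC]
    rcases hD1 i with h | h <;> simp [h]
  rw [hNvC] at hnnpos ⊢
  have hcardsum : C.card + Cᶜ.card = N := by
    rw [Finset.card_add_card_compl]
    exact Fintype.card_fin N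
  have hrc0 : ((C.card : ℕ) : ℝ) ≠ 0 := by
    have : 1 ≤ C.card := by omega
    exact Nat.cast_ne_zero.mpr (by omega)
  have hrn0 : ((Cᶜ.card : ℕ) : ℝ) ≠ 0 := Nat.cast_ne_zero.mpr (by omega)
  have hrn10 : ((n1 : ℕ) : ℝ) ≠ 0 := Nat.cast_ne_zero.mpr (by omega)
  have hrN0 : ((N : ℕ) : ℝ) ≠ 0 := Nat.cast_ne_zero.mpr (by omega)
  have hd : (N : ℝ) - (n1 : ℝ) ≠ 0 := by
    have : (n1 : ℝ) < (N : ℝ) := by exact_mod_cast hn1ltN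
    linarith
  have hrnE : ((Cᶜ.card : ℕ) : ℝ) = (N : ℝ) - (C.card : ℝ) := by
    have : ((C.card : ℕ) : ℝ) + ((Cᶜ.card : ℕ) : ℝ) = (N : ℝ) := by exact_mod_cast hcardsum
    linarith
  have hcast0 : ((N - n1 : ℕ) : ℝ) = (N : ℝ) - (n1 : ℝ) := by
    push_cast [hn1N']
    ring
  have hK0 : ((𝒯.card : ℕ) : ℝ) ≠ 0 := by
    have h1 : 𝒯.card = N.choose n1 := by
      rw [h𝒯def, Finset.card_powersetCard, Finset.card_univ, Fintype.card_fin]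
    have h2 : 0 < N.choose n1 := Nat.choose_pos hn1N'
    rw [h1]
    exact Nat.cast_ne_zero.mpr (by omega)
  have hTcard : ∀ T ∈ 𝒯, T.card = n1 := fun T hT => Finset.mem_powersetCard_univ.mp hT
  have hmpos : ∀ T ∈ 𝒯, 1 ≤ (T ∩ C).card := by
    intro T hT
    have h2 : Tᶜ.card = N - n1 := by
      rw [Finset.card_compl, hTcard T hT, Fintype.card_fin]
    have h3 : (C ∩ T).card + (C \ T).card = C.card := Finset.card_inter_add_card_sdiff C T
    have h4 : C \ T ⊆ Tᶜ := fun x hx => Finset.mem_compl.mpr (Finset.mem_sdiff.mp hx).2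
    have h5 : (C \ T).card ≤ N - n1 := h2 ▸ Finset.card_le_card h4
    have h6 : (T ∩ C).card = (C ∩ T).card := by rw [Finset.inter_comm]
    omega
  have hm0 : ∀ T ∈ 𝒯, (((T ∩ C).card : ℕ) : ℝ) ≠ 0 := by
    intro T hT
    have := hmpos T hT
    exact Nat.cast_ne_zero.mpr (by omega)
  have hDval : ∀ i, D1 i = if i ∈ C then (1 : ℝ) else 0 := by
    intro i
    rcases hD1 i with h | h <;> simp [hC i, h]
  have hsumD1 : ∀ T : Finset (Fin N), ∑ i ∈ T, D1 i = (((T ∩ C).card : ℕ) : ℝ) := by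
    intro T
    rw [show ∑ i ∈ T, D1 i = ∑ i ∈ T, (if i ∈ C then (1:ℝ) else 0) from
      Finset.sum_congr rfl fun i _ => hDval i]
    rw [Finset.sum_ite_mem]
    simp
  have hfm : ∀ T ∈ 𝒯, fhat T = (((T ∩ C).card : ℕ) : ℝ) / (n1 : ℝ) := by
    intro T hT
    rw [hf T, hsumD1 T]
    simp [hD0zero]
  -- the three master-lemma consequences
  have hwC : ∀ a ∈ C, ∀ b ∈ C, ∀ T : Finset (Fin N),
      (1 : ℝ) / (((T.image (Equiv.swap a b) ∩ C).card : ℕ) : ℝ)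
        = 1 / (((T ∩ C).card : ℕ) : ℝ) := by
    intro a ha b hb T
    rw [card_inter_image_swap (iff_of_true ha hb)]
  have hwN : ∀ a ∈ Cᶜ, ∀ b ∈ Cᶜ, ∀ T : Finset (Fin N),
      (1 : ℝ) / (((T.image (Equiv.swap a b) ∩ C).card : ℕ) : ℝ)
        = 1 / (((T ∩ C).card : ℕ) : ℝ) := by
    intro a ha b hb T
    rw [card_inter_image_swap (iff_of_false (Finset.mem_compl.mp ha) (Finset.mem_compl.mp hb))]
  have I1 : ∀ g : Fin N → ℝ,
      ((C.card : ℕ) : ℝ) * ∑ T ∈ 𝒯, (1 / (((T ∩ C).card : ℕ) : ℝ)) * ∑ x ∈ T ∩ C, g x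
        = (∑ x ∈ C, g x) * ((𝒯.card : ℕ) : ℝ) := by
    intro g
    rw [master n1 C (fun T => 1 / (((T ∩ C).card : ℕ) : ℝ)) (fun a ha b hb T => hwC a ha b hb T) g]
    congr 1
    rw [show ∑ T ∈ 𝒯, (1 / (((T ∩ C).card : ℕ) : ℝ)) * (((T ∩ C).card : ℕ) : ℝ)
        = ∑ T ∈ 𝒯, (1:ℝ) from Finset.sum_congr rfl fun T hT => one_div_mul_cancel (hm0 T hT)]
    simp
  have hVcard : ∀ T ∈ 𝒯, (((T ∩ Cᶜ).card : ℕ) : ℝ) = (n1 : ℝ) - (((T ∩ C).card : ℕ) : ℝ) := by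
    intro T hT
    have h1 : (T ∩ C).card + (T \ C).card = T.card := Finset.card_inter_add_card_sdiff T C
    have h2 : T ∩ Cᶜ = T \ C := by ext x; simp
    rw [hTcard T hT] at h1
    rw [h2]
    have h3 : (((T ∩ C).card : ℕ) : ℝ) + (((T \ C).card : ℕ) : ℝ) = (n1 : ℝ) := by
      exact_mod_cast h1
    linarith
  have I2 : ((Cᶜ.card : ℕ) : ℝ) * ∑ T ∈ 𝒯, (1 / (((T ∩ C).card : ℕ) : ℝ)) * ∑ x ∈ T ∩ Cᶜ, Y0 x
      = (∑ x ∈ Cᶜ, Y0 x) *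
        ((n1 : ℝ) * (∑ T ∈ 𝒯, 1 / (((T ∩ C).card : ℕ) : ℝ)) - ((𝒯.card : ℕ) : ℝ)) := by
    rw [master n1 Cᶜ (fun T => 1 / (((T ∩ C).card : ℕ) : ℝ)) (fun a ha b hb T => hwN a ha b hb T) Y0]
    congr 1
    calc ∑ T ∈ 𝒯, (1 / (((T ∩ C).card : ℕ) : ℝ)) * (((T ∩ Cᶜ).card : ℕ) : ℝ)
        = ∑ T ∈ 𝒯, ((n1 : ℝ) * (1 / (((T ∩ C).card : ℕ) : ℝ)) - 1) := by
          refine Finset.sum_congr rfl fun T hT => ?_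
          rw [hVcard T hT]
          have hm := hm0 T hT
          field_simp
      _ = (n1 : ℝ) * (∑ T ∈ 𝒯, 1 / (((T ∩ C).card : ℕ) : ℝ)) - ((𝒯.card : ℕ) : ℝ) := by
          rw [Finset.sum_sub_distrib, ← Finset.mul_sum]
          simp
  have I3 : (N : ℝ) * ∑ T ∈ 𝒯, (((T ∩ C).card : ℕ) : ℝ)
      = ((C.card : ℕ) : ℝ) * (n1 : ℝ) * ((𝒯.card : ℕ) : ℝ) := by
    have hm := master n1 (univ : Finset (Fin N)) (fun _ => 1)
      (fun a _ b _ T => rfl) (fun x => if x ∈ C then (1:ℝ) else 0)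
    simp only [Finset.inter_univ, one_mul] at hm
    have e1 : ∀ T : Finset (Fin N), ∑ x ∈ T, (if x ∈ C then (1:ℝ) else 0)
        = (((T ∩ C).card : ℕ) : ℝ) := by
      intro T
      rw [Finset.sum_ite_mem]
      simp
    have e2 : ∑ x ∈ (univ : Finset (Fin N)), (if x ∈ C then (1:ℝ) else 0) = ((C.card : ℕ) : ℝ) := by
      rw [Finset.sum_ite_mem]
      simp
    have e3 : ∑ T ∈ 𝒯, ((T.card : ℕ) : ℝ) = ((𝒯.card : ℕ) : ℝ) * (n1 : ℝ) := by
      rw [show ∑ T ∈ 𝒯, ((T.card : ℕ) : ℝ) = ∑ T ∈ 𝒯, ((n1 : ℕ) : ℝ) from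
        Finset.sum_congr rfl fun T hT => by rw [hTcard T hT]]
      rw [Finset.sum_const]
      simp [nsmul_eq_mul]
    rw [Finset.sum_congr rfl (fun T _ => e1 T), e2, e3] at hm
    rw [Finset.card_univ, Fintype.card_fin] at hm
    rw [hm]
    ring
  -- per-assignment decomposition of ITThat T / fhat T
  have hsplit : ∀ T ∈ 𝒯, ITThat T / fhat T
      = (1 / (((T ∩ C).card : ℕ) : ℝ)) * ∑ x ∈ T ∩ C, Y1 x
        + (1 / (((T ∩ C).card : ℕ) : ℝ)) * ∑ x ∈ T ∩ Cᶜ, Y0 x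
        - (n1 : ℝ) / ((N : ℝ) - (n1 : ℝ)) * (∑ x ∈ C, Y0 x) * (1 / (((T ∩ C).card : ℕ) : ℝ))
        + (n1 : ℝ) / ((N : ℝ) - (n1 : ℝ)) * ((1 / (((T ∩ C).card : ℕ) : ℝ)) * ∑ x ∈ T ∩ C, Y0 x)
        - (n1 : ℝ) / ((N : ℝ) - (n1 : ℝ)) * (∑ x ∈ Cᶜ, Y0 x) * (1 / (((T ∩ C).card : ℕ) : ℝ))
        + (n1 : ℝ) / ((N : ℝ) - (n1 : ℝ)) * ((1 / (((T ∩ C).card : ℕ) : ℝ)) * ∑ x ∈ T ∩ Cᶜ, Y0 x) := by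
    intro T hT
    have hsplitY1 : ∑ x ∈ T, Y1 x = ∑ x ∈ T ∩ C, Y1 x + ∑ x ∈ T ∩ Cᶜ, Y0 x := by
      have h1 : ∑ x ∈ T ∩ C, Y1 x + ∑ x ∈ T \ C, Y1 x = ∑ x ∈ T, Y1 x :=
        Finset.sum_inter_add_sum_sdiff T C Y1
      have h2 : T ∩ Cᶜ = T \ C := by ext x; simp
      have h3 : ∀ x ∈ T \ C, Y1 x = Y0 x := by
        intro x hx
        have hxC : x ∉ C := (Finset.mem_sdiff.mp hx).2
        apply excl
        rcases hD1 x with h | h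
        · rw [h, hD0zero]
        · exact absurd ((hC x).mpr h) hxC
      rw [← h1, h2]
      congr 1
      exact Finset.sum_congr rfl h3
    have hsplitY0 : ∑ x ∈ Tᶜ, Y0 x
        = ((∑ x ∈ C, Y0 x) - ∑ x ∈ T ∩ C, Y0 x)
          + ((∑ x ∈ Cᶜ, Y0 x) - ∑ x ∈ T ∩ Cᶜ, Y0 x) := by
      have h1 : ∑ x ∈ Tᶜ ∩ C, Y0 x + ∑ x ∈ Tᶜ \ C, Y0 x = ∑ x ∈ Tᶜ, Y0 x :=
        Finset.sum_inter_add_sum_sdiff Tᶜ C Y0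
      have h2 : ∑ x ∈ C ∩ T, Y0 x + ∑ x ∈ C \ T, Y0 x = ∑ x ∈ C, Y0 x :=
        Finset.sum_inter_add_sum_sdiff C T Y0
      have h3 : ∑ x ∈ Cᶜ ∩ T, Y0 x + ∑ x ∈ Cᶜ \ T, Y0 x = ∑ x ∈ Cᶜ, Y0 x :=
        Finset.sum_inter_add_sum_sdiff Cᶜ T Y0
      have e1 : Tᶜ ∩ C = C \ T := by ext x; simp [and_comm]
      have e2 : Tᶜ \ C = Cᶜ \ T := by ext x; simp [and_comm]
      have e3 : C ∩ T = T ∩ C := Finset.inter_comm C T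
      have e4 : Cᶜ ∩ T = T ∩ Cᶜ := Finset.inter_comm Cᶜ T
      rw [e1, e2] at h1
      rw [e3] at h2
      rw [e4] at h3
      linarith
    rw [hITT T, hfm T hT, hsplitY1, hsplitY0, hcast0]
    have hm := hm0 T hT
    field_simp
    ring
  -- summed decomposition
  have hsum0 : ∑ T ∈ 𝒯, ITThat T / fhat T
      = (∑ T ∈ 𝒯, (1 / (((T ∩ C).card : ℕ) : ℝ)) * ∑ x ∈ T ∩ C, Y1 x)
        + (∑ T ∈ 𝒯, (1 / (((T ∩ C).card : ℕ) : ℝ)) * ∑ x ∈ T ∩ Cᶜ, Y0 x)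
        - (n1 : ℝ) / ((N : ℝ) - (n1 : ℝ)) * (∑ x ∈ C, Y0 x)
            * (∑ T ∈ 𝒯, 1 / (((T ∩ C).card : ℕ) : ℝ))
        + (n1 : ℝ) / ((N : ℝ) - (n1 : ℝ))
            * (∑ T ∈ 𝒯, (1 / (((T ∩ C).card : ℕ) : ℝ)) * ∑ x ∈ T ∩ C, Y0 x)
        - (n1 : ℝ) / ((N : ℝ) - (n1 : ℝ)) * (∑ x ∈ Cᶜ, Y0 x)
            * (∑ T ∈ 𝒯, 1 / (((T ∩ C).card : ℕ) : ℝ))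
        + (n1 : ℝ) / ((N : ℝ) - (n1 : ℝ))
            * (∑ T ∈ 𝒯, (1 / (((T ∩ C).card : ℕ) : ℝ)) * ∑ x ∈ T ∩ Cᶜ, Y0 x) := by
    rw [Finset.sum_congr rfl hsplit]
    simp only [Finset.sum_add_distrib, Finset.sum_sub_distrib, ← Finset.mul_sum]
  -- closed forms for the three sums
  have eSU1 : ∑ T ∈ 𝒯, (1 / (((T ∩ C).card : ℕ) : ℝ)) * ∑ x ∈ T ∩ C, Y1 x
      = (∑ x ∈ C, Y1 x) * ((𝒯.card : ℕ) : ℝ) / ((C.card : ℕ) : ℝ) := by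
    rw [eq_div_iff hrc0]
    linear_combination I1 Y1
  have eSU0 : ∑ T ∈ 𝒯, (1 / (((T ∩ C).card : ℕ) : ℝ)) * ∑ x ∈ T ∩ C, Y0 x
      = (∑ x ∈ C, Y0 x) * ((𝒯.card : ℕ) : ℝ) / ((C.card : ℕ) : ℝ) := by
    rw [eq_div_iff hrc0]
    linear_combination I1 Y0
  have eSV : ∑ T ∈ 𝒯, (1 / (((T ∩ C).card : ℕ) : ℝ)) * ∑ x ∈ T ∩ Cᶜ, Y0 x
      = (∑ x ∈ Cᶜ, Y0 x) *
          ((n1 : ℝ) * (∑ T ∈ 𝒯, 1 / (((T ∩ C).card : ℕ) : ℝ)) - ((𝒯.card : ℕ) : ℝ))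
          / ((Cᶜ.card : ℕ) : ℝ) := by
    rw [eq_div_iff hrn0]
    linear_combination I2
  have hbig : ∑ T ∈ 𝒯, ITThat T / fhat T
      = (∑ x ∈ C, Y1 x) * ((𝒯.card : ℕ) : ℝ) / ((C.card : ℕ) : ℝ)
        + (∑ x ∈ Cᶜ, Y0 x) *
            ((n1 : ℝ) * (∑ T ∈ 𝒯, 1 / (((T ∩ C).card : ℕ) : ℝ)) - ((𝒯.card : ℕ) : ℝ))
            / ((Cᶜ.card : ℕ) : ℝ)
        - (n1 : ℝ) / ((N : ℝ) - (n1 : ℝ)) * (∑ x ∈ C, Y0 x)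
            * (∑ T ∈ 𝒯, 1 / (((T ∩ C).card : ℕ) : ℝ))
        + (n1 : ℝ) / ((N : ℝ) - (n1 : ℝ))
            * ((∑ x ∈ C, Y0 x) * ((𝒯.card : ℕ) : ℝ) / ((C.card : ℕ) : ℝ))
        - (n1 : ℝ) / ((N : ℝ) - (n1 : ℝ)) * (∑ x ∈ Cᶜ, Y0 x)
            * (∑ T ∈ 𝒯, 1 / (((T ∩ C).card : ℕ) : ℝ))
        + (n1 : ℝ) / ((N : ℝ) - (n1 : ℝ))
            * ((∑ x ∈ Cᶜ, Y0 x) *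
                ((n1 : ℝ) * (∑ T ∈ 𝒯, 1 / (((T ∩ C).card : ℕ) : ℝ)) - ((𝒯.card : ℕ) : ℝ))
                / ((Cᶜ.card : ℕ) : ℝ)) := by
    rw [hsum0, eSU1, eSU0, eSV]
  -- sums of fhat and 1/fhat
  have hSinv : ∑ T ∈ 𝒯, 1 / fhat T
      = (n1 : ℝ) * (∑ T ∈ 𝒯, 1 / (((T ∩ C).card : ℕ) : ℝ)) := by
    rw [show ∑ T ∈ 𝒯, 1 / fhat T
        = ∑ T ∈ 𝒯, (n1 : ℝ) * (1 / (((T ∩ C).card : ℕ) : ℝ)) from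
      Finset.sum_congr rfl fun T hT => by
        rw [hfm T hT, one_div_div]
        ring]
    rw [← Finset.mul_sum]
  have hSf : ∑ T ∈ 𝒯, fhat T
      = ((C.card : ℕ) : ℝ) * (n1 : ℝ) * ((𝒯.card : ℕ) : ℝ) / (N : ℝ) / (n1 : ℝ) := by
    rw [show ∑ T ∈ 𝒯, fhat T
        = ∑ T ∈ 𝒯, (((T ∩ C).card : ℕ) : ℝ) / (n1 : ℝ) from
      Finset.sum_congr rfl fun T hT => hfm T hT]
    rw [← Finset.sum_div]
    congr 1
    rw [eq_div_iff hrN0]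
    linear_combination I3
  rw [hbig, hSinv, hSf]
  exact final_algebra ((𝒯.card : ℕ) : ℝ) (∑ T ∈ 𝒯, 1 / (((T ∩ C).card : ℕ) : ℝ))
    (∑ x ∈ C, Y1 x) (∑ x ∈ C, Y0 x) (∑ x ∈ Cᶜ, Y0 x)
    ((C.card : ℕ) : ℝ) ((Cᶜ.card : ℕ) : ℝ) (n1 : ℝ) (N : ℝ)
    hK0 hrc0 hrn0 hrn10 hrN0 hd hrnE
end
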